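/- arXiv:2203.14624 — 7 statements merged into one kernel-verified Lean document; each statement's English description precedes it below -/
import Mathlib

section
/- Let T > 0. If φ(t) > 0 for all t ∈ (0,T), then ψ(t) > 0 for all t ∈ (0,T), and moreover φ'(t)/φ(t) ≤ ψ'(t)/ψ(t) and φ(t) ≤ ψ(t) for all t ∈ (0,T). -/
open Set

/-!
The Wronskian `W = ψ' φ - φ' ψ` satisfies `W' = ψ'' φ - φ'' ψ ≥ G ψ φ - G φ ψ = 0` wherever
`φ, ψ ≥ 0`, and `W(0) = b̃ - b ≥ 0`; hence `W ≥ 0`, i.e. `(ψ / φ)' = W / φ² ≥ 0`, so `ψ / φ ≥ 1`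
as long as `ψ` stays positive. At a first zero `t₁ < T` of `ψ` this would give `ψ t₁ ≥ φ t₁ > 0`,
so `ψ` has no zero in `(0, T)`.
-/

section Wronskian

variable {D : Set ℝ} {φ ψ φ' ψ' : ℝ → ℝ}

theorem monotoneOn_wronskian (hD : Convex ℝ D) {G φ'' ψ'' : ℝ → ℝ}
    (hφ : ∀ t ∈ D, HasDerivWithinAt φ (φ' t) D t) (hψ : ∀ t ∈ D, HasDerivWithinAt ψ (ψ' t) D t)
    (hφ' : ∀ t ∈ D, HasDerivWithinAt φ' (φ'' t) D t)
    (hψ' : ∀ t ∈ D, HasDerivWithinAt ψ' (ψ'' t) D t)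
    (hφ'' : ∀ t ∈ interior D, φ'' t ≤ G t * φ t) (hψ'' : ∀ t ∈ interior D, G t * ψ t ≤ ψ'' t)
    (hφ_nonneg : ∀ t ∈ interior D, 0 ≤ φ t) (hψ_nonneg : ∀ t ∈ interior D, 0 ≤ ψ t) :
    MonotoneOn (fun t => ψ' t * φ t - φ' t * ψ t) D := by
  have hW : ∀ t ∈ D, HasDerivWithinAt (fun t => ψ' t * φ t - φ' t * ψ t)
      (ψ'' t * φ t + ψ' t * φ' t - (φ'' t * ψ t + φ' t * ψ' t)) D t := fun t ht =>
    ((hψ' t ht).mul (hφ t ht)).sub ((hφ' t ht).mul (hψ t ht))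
  refine monotoneOn_of_hasDerivWithinAt_nonneg hD
    (fun t ht => (hW t ht).continuousWithinAt)
    (fun t ht => (hW t (interior_subset ht)).mono interior_subset) fun t ht => ?_
  nlinarith [mul_le_mul_of_nonneg_right (hψ'' t ht) (hφ_nonneg t ht),
    mul_le_mul_of_nonneg_right (hφ'' t ht) (hψ_nonneg t ht)]

theorem monotoneOn_div_of_wronskian_nonneg (hD : Convex ℝ D)
    (hφ : ∀ t ∈ D, HasDerivWithinAt φ (φ' t) D t) (hψ : ∀ t ∈ D, HasDerivWithinAt ψ (ψ' t) D t)
    (hφ_ne : ∀ t ∈ D, φ t ≠ 0) (hW : ∀ t ∈ interior D, 0 ≤ ψ' t * φ t - φ' t * ψ t) :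
    MonotoneOn (fun t => ψ t / φ t) D := by
  have hdiv : ∀ t ∈ D, HasDerivWithinAt (fun t => ψ t / φ t)
      ((ψ' t * φ t - ψ t * φ' t) / φ t ^ 2) D t := fun t ht =>
    (hψ t ht).div (hφ t ht) (hφ_ne t ht)
  refine monotoneOn_of_hasDerivWithinAt_nonneg hD
    (fun t ht => (hdiv t ht).continuousWithinAt)
    (fun t ht => (hdiv t (interior_subset ht)).mono interior_subset) fun t ht => ?_
  rw [mul_comm (ψ t)]
  exact div_nonneg (hW t ht) (sq_nonneg _)

end Wronskian

theorem forall_mem_Ico_pos_of_forall_mem_Ioo_pos_imp {f : ℝ → ℝ} {a b : ℝ}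
    (hf : ContinuousOn f (Ico a b)) (ha : 0 < f a)
    (h : ∀ c ∈ Ioo a b, (∀ t ∈ Ioo a c, 0 < f t) → 0 < f c) : ∀ t ∈ Ico a b, 0 < f t := by
  by_contra! ⟨s, hs, hfs⟩
  have hf_s : ContinuousOn f (Icc a s) := hf.mono (Icc_subset_Ico_right hs.2)
  have hZ : IsCompact (Icc a s ∩ f ⁻¹' Iic 0) :=
    isCompact_Icc.of_isClosed_subset
      (hf_s.preimage_isClosed_of_isClosed isClosed_Icc isClosed_Iic) inter_subset_left
  obtain ⟨t₁, ⟨ht₁s, hft₁⟩, ht₁_least⟩ := hZ.exists_isLeast ⟨s, ⟨⟨hs.1, le_rfl⟩, hfs⟩⟩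
  have hat₁ : a < t₁ := ht₁s.1.lt_of_ne (by rintro rfl; exact (not_le.2 ha) hft₁)
  refine (not_le.2 (h t₁ ⟨hat₁, ht₁s.2.trans_lt hs.2⟩ fun t ht => ?_)) hft₁
  by_contra! hft
  exact (ht₁_least ⟨⟨ht.1.le, ht.2.le.trans ht₁s.2⟩, hft⟩).not_gt ht.2

theorem sturm_comparison {G φ ψ φ' ψ' φ'' ψ'' : ℝ → ℝ} {a c : ℝ} (hac : a ≤ c)
    (hφ : ∀ t ∈ Ici a, HasDerivWithinAt φ (φ' t) (Ici a) t)
    (hψ : ∀ t ∈ Ici a, HasDerivWithinAt ψ (ψ' t) (Ici a) t)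
    (hφ' : ∀ t ∈ Ici a, HasDerivWithinAt φ' (φ'' t) (Ici a) t)
    (hψ' : ∀ t ∈ Ici a, HasDerivWithinAt ψ' (ψ'' t) (Ici a) t)
    (hφ'' : ∀ t ∈ Ioo a c, φ'' t ≤ G t * φ t) (hψ'' : ∀ t ∈ Ioo a c, G t * ψ t ≤ ψ'' t)
    (hφ_pos : ∀ t ∈ Icc a c, 0 < φ t) (hψ_pos : ∀ t ∈ Ioo a c, 0 < ψ t)
    (hWa : 0 ≤ ψ' a * φ a - φ' a * ψ a) :
    0 ≤ ψ' c * φ c - φ' c * ψ c ∧ ψ a / φ a ≤ ψ c / φ c := by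
  have hmono {f f' : ℝ → ℝ} (hf : ∀ t ∈ Ici a, HasDerivWithinAt f (f' t) (Ici a) t) :
      ∀ t ∈ Icc a c, HasDerivWithinAt f (f' t) (Icc a c) t := fun t ht =>
    (hf t ht.1).mono Icc_subset_Ici_self
  have ha : a ∈ Icc a c := left_mem_Icc.2 hac
  have hc : c ∈ Icc a c := right_mem_Icc.2 hac
  rw [← interior_Icc] at hφ'' hψ'' hψ_pos
  have hW := monotoneOn_wronskian (convex_Icc a c) (hmono hφ) (hmono hψ) (hmono hφ') (hmono hψ')
    hφ'' hψ'' (fun t ht => (hφ_pos t (interior_subset ht)).le) fun t ht => (hψ_pos t ht).le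
  have hW_nonneg : ∀ t ∈ Icc a c, 0 ≤ ψ' t * φ t - φ' t * ψ t := fun t ht =>
    hWa.trans (hW ha ht ht.1)
  exact ⟨hW_nonneg c hc, monotoneOn_div_of_wronskian_nonneg (convex_Icc a c) (hmono hφ)
    (hmono hψ) (fun t ht => (hφ_pos t ht).ne') (fun t ht => hW_nonneg t (interior_subset ht))
    ha hc hac⟩

theorem ContDiffOn.hasDerivWithinAt_derivWithin_of_two {f : ℝ → ℝ} {s : Set ℝ}
    (hs : UniqueDiffOn ℝ s) (hf : ContDiffOn ℝ 2 f s) :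
    (∀ t ∈ s, HasDerivWithinAt f (derivWithin f s t) s t) ∧
      ∀ t ∈ s, HasDerivWithinAt (derivWithin f s) (derivWithin (derivWithin f s) s t) s t :=
  ⟨fun t ht => (hf.differentiableOn two_ne_zero t ht).hasDerivWithinAt,
    fun t ht => ((hf.derivWithin (m := 1) hs (by norm_num)).differentiableOn one_ne_zero t
      ht).hasDerivWithinAt⟩

theorem stmt_0_general (G φ ψ : ℝ → ℝ) (b b' : ℝ)
    (hφ : ContDiffOn ℝ 2 φ (Ici 0))
    (hψ : ContDiffOn ℝ 2 ψ (Ici 0))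
    (hφ'' : ∀ t ∈ Ioi (0 : ℝ),
      derivWithin (derivWithin φ (Ici 0)) (Ici 0) t ≤ G t * φ t)
    (hψ'' : ∀ t ∈ Ioi (0 : ℝ),
      G t * ψ t ≤ derivWithin (derivWithin ψ (Ici 0)) (Ici 0) t)
    (hφ0 : φ 0 = 1) (hψ0 : ψ 0 = 1)
    (hφ'0 : derivWithin φ (Ici 0) 0 = b)
    (hψ'0 : derivWithin ψ (Ici 0) 0 = b')
    (hbb : b ≤ b')
    (T : ℝ)
    (hφpos : ∀ t ∈ Ioo 0 T, 0 < φ t) :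
    (∀ t ∈ Ioo 0 T, 0 < ψ t) ∧
    (∀ t ∈ Ioo 0 T,
      derivWithin φ (Ici 0) t / φ t ≤ derivWithin ψ (Ici 0) t / ψ t) ∧
    (∀ t ∈ Ioo 0 T, φ t ≤ ψ t) := by
  obtain ⟨hφ₁, hφ₂⟩ := hφ.hasDerivWithinAt_derivWithin_of_two (uniqueDiffOn_Ici 0)
  obtain ⟨hψ₁, hψ₂⟩ := hψ.hasDerivWithinAt_derivWithin_of_two (uniqueDiffOn_Ici 0)
  have comparison : ∀ c ∈ Ioo 0 T, (∀ t ∈ Ioo 0 c, 0 < ψ t) →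
      0 ≤ derivWithin ψ (Ici 0) c * φ c - derivWithin φ (Ici 0) c * ψ c ∧ φ c ≤ ψ c := by
    intro c hc hψc
    have hφc : ∀ t ∈ Icc 0 c, 0 < φ t := fun t ht =>
      ht.1.eq_or_lt.elim (fun h => h ▸ hφ0 ▸ one_pos) fun h => hφpos t ⟨h, ht.2.trans_lt hc.2⟩
    obtain ⟨hW, hdiv⟩ := sturm_comparison hc.1.le hφ₁ hψ₁ hφ₂ hψ₂
      (fun t ht => hφ'' t ht.1) (fun t ht => hψ'' t ht.1) hφc hψc
      (by rw [hφ0, hψ0, hφ'0, hψ'0]; linarith)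
    rw [hφ0, hψ0, div_one, one_le_div (hφc c ⟨hc.1.le, le_rfl⟩)] at hdiv
    exact ⟨hW, hdiv⟩
  have hψ_pos : ∀ t ∈ Ioo 0 T, 0 < ψ t := fun t ht =>
    forall_mem_Ico_pos_of_forall_mem_Ioo_pos_imp (hψ.continuousOn.mono Ico_subset_Ici_self)
      (hψ0 ▸ one_pos) (fun c hc hψc => (hφpos c hc).trans_le (comparison c hc hψc).2) t
      (Ioo_subset_Ico_self ht)
  have hcomp (t : ℝ) (ht : t ∈ Ioo 0 T) :=
    comparison t ht fun u hu => hψ_pos u ⟨hu.1, hu.2.trans ht.2⟩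
  refine ⟨hψ_pos, fun t ht => ?_, fun t ht => (hcomp t ht).2⟩
  rw [div_le_div_iff₀ (hφpos t ht) (hψ_pos t ht)]
  linarith [(hcomp t ht).1]

/-- Sturm-type comparison (Lemma 2.5): if `φ'' ≤ G φ`, `ψ'' ≥ G ψ` on `(0,∞)`,
`φ(0) = ψ(0) = 1`, `φ'(0) = b ≤ b̃ = ψ'(0)`, and `φ > 0` on `(0,T)`,
then `ψ > 0`, `φ'/φ ≤ ψ'/ψ` and `φ ≤ ψ` on `(0,T)`. -/
theorem stmt_0 (G φ ψ : ℝ → ℝ) (b b' : ℝ)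
    (hG : ContinuousOn G (Ici 0))
    (hφ : ContDiffOn ℝ 2 φ (Ici 0))
    (hψ : ContDiffOn ℝ 2 ψ (Ici 0))
    (hφ'' : ∀ t ∈ Ioi (0 : ℝ),
      derivWithin (derivWithin φ (Ici 0)) (Ici 0) t ≤ G t * φ t)
    (hψ'' : ∀ t ∈ Ioi (0 : ℝ),
      G t * ψ t ≤ derivWithin (derivWithin ψ (Ici 0)) (Ici 0) t)
    (hφ0 : φ 0 = 1) (hψ0 : ψ 0 = 1)
    (hφ'0 : derivWithin φ (Ici 0) 0 = b)
    (hψ'0 : derivWithin ψ (Ici 0) 0 = b')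
    (hbb : b ≤ b')
    (T : ℝ) (hT : 0 < T)
    (hφpos : ∀ t ∈ Ioo 0 T, 0 < φ t) :
    (∀ t ∈ Ioo 0 T, 0 < ψ t) ∧
    (∀ t ∈ Ioo 0 T,
      derivWithin φ (Ici 0) t / φ t ≤ derivWithin ψ (Ici 0) t / ψ t) ∧
    (∀ t ∈ Ioo 0 T, φ t ≤ ψ t) :=
  stmt_0_general G φ ψ b b' hφ hψ hφ'' hψ'' hφ0 hψ0 hφ'0 hψ'0 hbb T hφpos
end

section
/- Let τ > 0. If φ(t) > 0 and ψ(t) > 0 for all t ∈ (0,τ), then the function ψ'·φ − ψ·φ' is nonnegative on [0,τ). -/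
open Set Filter MeasureTheory

/-!
The Wronskian `W = ψ'φ - ψφ'` has derivative `W' = ψ''φ - ψφ'' ≥ Gψφ - ψGφ = 0` wherever
`φ, ψ ≥ 0`, so it is nondecreasing on `[0, τ)`, and `W 0 = b̃ - b ≥ 0`.
-/

noncomputable def wronskianWithin (φ ψ : ℝ → ℝ) (s : Set ℝ) (t : ℝ) : ℝ :=
  derivWithin ψ s t * φ t - ψ t * derivWithin φ s t

section Wronskian

variable {φ ψ : ℝ → ℝ} {a x : ℝ}

theorem ContDiffOn.hasDerivAt_derivWithin_Ici {f : ℝ → ℝ} {n : WithTop ℕ∞}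
    (hf : ContDiffOn ℝ n f (Ici a)) (hn : n ≠ 0) (hx : a < x) :
    HasDerivAt f (derivWithin f (Ici a) x) x :=
  ((hf.differentiableOn hn x hx.le).hasDerivWithinAt).hasDerivAt (Ici_mem_nhds hx)

theorem continuousOn_wronskianWithin_Ici (hφ : ContDiffOn ℝ 1 φ (Ici a))
    (hψ : ContDiffOn ℝ 1 ψ (Ici a)) : ContinuousOn (wronskianWithin φ ψ (Ici a)) (Ici a) :=
  have hφ' := hφ.continuousOn_derivWithin (uniqueDiffOn_Ici a) le_rfl
  have hψ' := hψ.continuousOn_derivWithin (uniqueDiffOn_Ici a) le_rfl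
  (hψ'.mul hφ.continuousOn).sub (hψ.continuousOn.mul hφ')

theorem hasDerivAt_wronskianWithin_Ici (hφ : ContDiffOn ℝ 2 φ (Ici a))
    (hψ : ContDiffOn ℝ 2 ψ (Ici a)) (hx : a < x) :
    HasDerivAt (wronskianWithin φ ψ (Ici a))
      (derivWithin (derivWithin ψ (Ici a)) (Ici a) x * φ x
        - ψ x * derivWithin (derivWithin φ (Ici a)) (Ici a) x) x := by
  have hφ' := hφ.derivWithin (m := 1) (uniqueDiffOn_Ici a) le_rfl
  have hψ' := hψ.derivWithin (m := 1) (uniqueDiffOn_Ici a) le_rfl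
  have hW := ((hψ'.hasDerivAt_derivWithin_Ici one_ne_zero hx).mul
    (hφ.hasDerivAt_derivWithin_Ici two_ne_zero hx)).sub
    ((hψ.hasDerivAt_derivWithin_Ici two_ne_zero hx).mul
      (hφ'.hasDerivAt_derivWithin_Ici one_ne_zero hx))
  exact hW.congr_deriv (by ring)

end Wronskian

theorem wronskian_deriv_nonneg {G φ ψ φ'' ψ'' : ℝ} (hφ : 0 ≤ φ) (hψ : 0 ≤ ψ)
    (hφ'' : φ'' ≤ G * φ) (hψ'' : G * ψ ≤ ψ'') : 0 ≤ ψ'' * φ - ψ * φ'' := by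
  nlinarith [mul_le_mul_of_nonneg_left hφ'' hψ, mul_le_mul_of_nonneg_right hψ'' hφ]

theorem stmt_1_general (G φ ψ : ℝ → ℝ) (b b' : ℝ)
    (hφ : ContDiffOn ℝ 2 φ (Ici 0))
    (hψ : ContDiffOn ℝ 2 ψ (Ici 0))
    (hφ'' : ∀ t ∈ Ioi (0 : ℝ),
      derivWithin (derivWithin φ (Ici 0)) (Ici 0) t ≤ G t * φ t)
    (hψ'' : ∀ t ∈ Ioi (0 : ℝ),
      G t * ψ t ≤ derivWithin (derivWithin ψ (Ici 0)) (Ici 0) t)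
    (hφ0 : φ 0 = 1) (hψ0 : ψ 0 = 1)
    (hφ'0 : derivWithin φ (Ici 0) 0 = b)
    (hψ'0 : derivWithin ψ (Ici 0) 0 = b')
    (hbb : b ≤ b')
    (τ : ℝ)
    (hφpos : ∀ t ∈ Ioo 0 τ, 0 < φ t)
    (hψpos : ∀ t ∈ Ioo 0 τ, 0 < ψ t) :
    ∀ t ∈ Ico 0 τ,
      0 ≤ derivWithin ψ (Ici 0) t * φ t - ψ t * derivWithin φ (Ici 0) t := by
  rintro t ⟨ht0, htτ⟩
  have hmono : MonotoneOn (wronskianWithin φ ψ (Ici 0)) (Icc 0 t) := by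
    refine monotoneOn_of_hasDerivWithinAt_nonneg (convex_Icc 0 t)
      (f' := fun x ↦ derivWithin (derivWithin ψ (Ici 0)) (Ici 0) x * φ x
        - ψ x * derivWithin (derivWithin φ (Ici 0)) (Ici 0) x)
      ((continuousOn_wronskianWithin_Ici (hφ.of_le one_le_two) (hψ.of_le one_le_two)).mono
        Icc_subset_Ici_self) (fun x hx ↦ ?_) (fun x hx ↦ ?_)
    · rw [interior_Icc] at hx
      exact (hasDerivAt_wronskianWithin_Ici hφ hψ hx.1).hasDerivWithinAt
    · rw [interior_Icc] at hx
      have hxτ : x ∈ Ioo 0 τ := ⟨hx.1, hx.2.trans htτ⟩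
      exact wronskian_deriv_nonneg (hφpos x hxτ).le (hψpos x hxτ).le (hφ'' x hx.1) (hψ'' x hx.1)
  calc 0 ≤ wronskianWithin φ ψ (Ici 0) 0 := by
        simp only [wronskianWithin, hφ0, hψ0, hφ'0, hψ'0]; linarith
    _ ≤ wronskianWithin φ ψ (Ici 0) t := hmono (left_mem_Icc.2 ht0) (right_mem_Icc.2 ht0) ht0

/-- Nonnegativity of the Wronskian `ψ'φ - ψφ'` on `[0,τ)` when `φ, ψ > 0` on `(0,τ)`,
where `φ'' ≤ G φ`, `ψ'' ≥ G ψ`, `φ(0) = ψ(0) = 1`, `φ'(0) = b ≤ b̃ = ψ'(0)`. -/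
theorem stmt_1 (G φ ψ : ℝ → ℝ) (b b' : ℝ)
    (hG : ContinuousOn G (Ici 0))
    (hφ : ContDiffOn ℝ 2 φ (Ici 0))
    (hψ : ContDiffOn ℝ 2 ψ (Ici 0))
    (hφ'' : ∀ t ∈ Ioi (0 : ℝ),
      derivWithin (derivWithin φ (Ici 0)) (Ici 0) t ≤ G t * φ t)
    (hψ'' : ∀ t ∈ Ioi (0 : ℝ),
      G t * ψ t ≤ derivWithin (derivWithin ψ (Ici 0)) (Ici 0) t)
    (hφ0 : φ 0 = 1) (hψ0 : ψ 0 = 1)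
    (hφ'0 : derivWithin φ (Ici 0) 0 = b)
    (hψ'0 : derivWithin ψ (Ici 0) 0 = b')
    (hbb : b ≤ b')
    (τ : ℝ) (hτ : 0 < τ)
    (hφpos : ∀ t ∈ Ioo 0 τ, 0 < φ t)
    (hψpos : ∀ t ∈ Ioo 0 τ, 0 < ψ t) :
    ∀ t ∈ Ico 0 τ,
      0 ≤ derivWithin ψ (Ici 0) t * φ t - ψ t * derivWithin φ (Ici 0) t :=
  stmt_1_general G φ ψ b b' hφ hψ hφ'' hψ'' hφ0 hψ0 hφ'0 hψ'0 hbb τ hφpos hψpos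
end

section
/- If ∫₀^∞ G(t) dt < ∞, then the limits lim_{t→∞} h₂(t)/h₁(t) and lim_{t→∞} h₂'(t)/h₁'(t) both exist, are equal to each other, and satisfy lim_{t→∞} h₂(t)/h₁(t) = lim_{t→∞} h₂'(t)/h₁'(t) ≤ ∫₀^∞ G(t) dt < ∞. -/
open Set Filter MeasureTheory Topology

/-! Write `h'` for the derivative. Since `(h₁ h₁')' = h₁'² + G h₁² ≥ 0`, the product `h₁ h₁'`
stays `≥ 0`; hence `(h₁'²)' = 2 G h₁ h₁' ≥ 0`, so `h₁'² ≥ 1`, and as `h₁'` cannot cross `0` we get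
`h₁' ≥ 1` and `h₁(t) ≥ t`. The Wronskian `h₂ h₁' - h₂' h₁` is constantly `1`, so
`(h₂'/h₁')' = G / h₁'² ≤ G` is integrable and `h₂'/h₁' → ∫₀^∞ G / h₁'² ≤ ∫₀^∞ G`, while
`h₂/h₁ - h₂'/h₁' = 1 / (h₁ h₁') → 0`. -/

theorem monotoneOn_Ici_of_hasDerivWithinAt_nonneg {a : ℝ} {f f' : ℝ → ℝ}
    (hf : ∀ t ∈ Ici a, HasDerivWithinAt f (f' t) (Ici a) t) (hf' : ∀ t ∈ Ioi a, 0 ≤ f' t) :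
    MonotoneOn f (Ici a) := by
  refine monotoneOn_of_hasDerivWithinAt_nonneg (f' := f') (convex_Ici a)
    (fun t ht => (hf t ht).continuousWithinAt) ?_ ?_ <;> rw [interior_Ici]
  · exact fun t ht => (hf t (mem_Ici_of_Ioi ht)).mono Ioi_subset_Ici_self
  · exact hf'

theorem tendsto_add_integral_Ioi_of_hasDerivAt {a : ℝ} {f f' : ℝ → ℝ}
    (hcont : ContinuousWithinAt f (Ici a) a) (hderiv : ∀ t ∈ Ioi a, HasDerivAt f (f' t) t)
    (hint : IntegrableOn f' (Ioi a)) :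
    Tendsto f atTop (𝓝 (f a + ∫ t in Ioi a, f' t)) := by
  have hlim := tendsto_limUnder_of_hasDerivAt_of_integrableOn_Ioi hderiv hint
  rwa [integral_Ioi_of_hasDerivAt_of_tendsto hcont hderiv hint hlim, add_sub_cancel]

theorem MeasureTheory.IntegrableOn.div_of_one_le {s : Set ℝ} {f g : ℝ → ℝ} (hf : IntegrableOn f s)
    (hg : AEStronglyMeasurable g (volume.restrict s)) (hs : MeasurableSet s)
    (hg1 : ∀ t ∈ s, 1 ≤ g t) : IntegrableOn (fun t => f t / g t) s := by
  refine Integrable.mono hf (hf.aestronglyMeasurable.div₀ hg)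
    (ae_restrict_of_forall_mem hs fun t ht => ?_)
  rw [norm_div]
  exact div_le_self (norm_nonneg _) ((hg1 t ht).trans (Real.le_norm_self _))

theorem tendsto_div_sub_div_of_wronskian_eq_one {f g f' g' : ℝ → ℝ}
    (hf : ∀ t ∈ Ici (0 : ℝ), t ≤ f t) (hf' : ∀ t ∈ Ici (0 : ℝ), 1 ≤ f' t)
    (hW : ∀ t ∈ Ici (0 : ℝ), g t * f' t - g' t * f t = 1) :
    Tendsto (fun t => g t / f t - g' t / f' t) atTop (𝓝 0) := by
  have hprod : Tendsto (fun t => f t * f' t) atTop atTop := by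
    refine tendsto_atTop_mono' atTop ?_ tendsto_id
    filter_upwards [eventually_ge_atTop 0] with t ht
    show t ≤ f t * f' t
    nlinarith [hf t ht, hf' t ht]
  refine hprod.inv_tendsto_atTop.congr' ?_
  filter_upwards [eventually_gt_atTop 0] with t ht
  have hft : f t ≠ 0 := (ht.trans_le (hf t ht.le)).ne'
  have hft' : f' t ≠ 0 := (zero_lt_one.trans_le (hf' t ht.le)).ne'
  change (f t * f' t)⁻¹ = _
  rw [div_sub_div _ _ hft hft', inv_eq_one_div, ← hW t ht.le]
  ring

/-- `h` solves `h'' = G h` on `[0, ∞)`, with derivative `h'`. -/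
structure IsSolutionOnIci (G h h' : ℝ → ℝ) : Prop where
  hasDerivWithinAt : ∀ t ∈ Ici (0 : ℝ), HasDerivWithinAt h (h' t) (Ici 0) t
  hasDerivWithinAt_deriv : ∀ t ∈ Ici (0 : ℝ), HasDerivWithinAt h' (G t * h t) (Ici 0) t

namespace IsSolutionOnIci

variable {G h h' h₂ h₂' : ℝ → ℝ}

theorem of_contDiffOn (hh : ContDiffOn ℝ 2 h (Ici 0))
    (ode : ∀ t ∈ Ici (0 : ℝ), derivWithin (derivWithin h (Ici 0)) (Ici 0) t = G t * h t) :
    IsSolutionOnIci G h (derivWithin h (Ici 0)) := by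
  have hd : ContDiffOn ℝ 1 (derivWithin h (Ici 0)) (Ici 0) :=
    hh.derivWithin (uniqueDiffOn_Ici 0) (by norm_num)
  refine ⟨fun t ht => ?_, fun t ht => ?_⟩
  · exact (hh.differentiableOn (by norm_num) t ht).hasDerivWithinAt
  · rw [← ode t ht]
    exact (hd.differentiableOn one_ne_zero t ht).hasDerivWithinAt

theorem continuousOn (sol : IsSolutionOnIci G h h') : ContinuousOn h (Ici 0) :=
  fun t ht => (sol.hasDerivWithinAt t ht).continuousWithinAt

theorem continuousOn_deriv (sol : IsSolutionOnIci G h h') : ContinuousOn h' (Ici 0) :=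
  fun t ht => (sol.hasDerivWithinAt_deriv t ht).continuousWithinAt

theorem hasDerivAt {t : ℝ} (sol : IsSolutionOnIci G h h') (ht : 0 < t) :
    HasDerivAt h (h' t) t :=
  (sol.hasDerivWithinAt t ht.le).hasDerivAt (Ici_mem_nhds ht)

theorem hasDerivAt_deriv {t : ℝ} (sol : IsSolutionOnIci G h h') (ht : 0 < t) :
    HasDerivAt h' (G t * h t) t :=
  (sol.hasDerivWithinAt_deriv t ht.le).hasDerivAt (Ici_mem_nhds ht)

theorem monotoneOn_mul_deriv (sol : IsSolutionOnIci G h h') (hG : ∀ t ∈ Ici (0 : ℝ), 0 ≤ G t) :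
    MonotoneOn (fun t => h t * h' t) (Ici 0) := by
  refine monotoneOn_Ici_of_hasDerivWithinAt_nonneg
    (fun t ht => (sol.hasDerivWithinAt t ht).mul (sol.hasDerivWithinAt_deriv t ht)) ?_
  intro t ht
  nlinarith [mul_self_nonneg (h' t), mul_nonneg (hG t (mem_Ici_of_Ioi ht)) (mul_self_nonneg (h t))]

theorem one_le_deriv (sol : IsSolutionOnIci G h h') (hG : ∀ t ∈ Ici (0 : ℝ), 0 ≤ G t)
    (h0 : h 0 = 0) (h'0 : h' 0 = 1) : ∀ t ∈ Ici (0 : ℝ), 1 ≤ h' t := by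
  have mul_deriv_nonneg : ∀ t ∈ Ici (0 : ℝ), 0 ≤ h t * h' t := fun t ht => by
    simpa [h0] using sol.monotoneOn_mul_deriv hG self_mem_Ici ht ht
  have hsq : MonotoneOn (fun t => h' t ^ 2) (Ici 0) := by
    refine monotoneOn_Ici_of_hasDerivWithinAt_nonneg
      (fun t ht => (sol.hasDerivWithinAt_deriv t ht).pow 2) fun t ht => ?_
    simp only [Nat.cast_ofNat, Nat.add_one_sub_one, pow_one]
    nlinarith [mul_deriv_nonneg t (mem_Ici_of_Ioi ht), hG t (mem_Ici_of_Ioi ht)]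
  have one_le_sq : ∀ t ∈ Ici (0 : ℝ), 1 ≤ h' t ^ 2 := fun t ht => by
    simpa [h'0] using hsq self_mem_Ici ht ht
  intro t ht
  by_contra! hlt
  have hneg : h' t < 0 := by nlinarith [one_le_sq t ht]
  obtain ⟨s, hs, hs0⟩ : (0 : ℝ) ∈ h' '' Icc 0 t :=
    intermediate_value_Icc' ht (sol.continuousOn_deriv.mono Icc_subset_Ici_self)
      ⟨hneg.le, h'0 ▸ zero_le_one⟩
  exact absurd (one_le_sq s hs.1) (by simp [hs0])

theorem self_le (sol : IsSolutionOnIci G h h') (hG : ∀ t ∈ Ici (0 : ℝ), 0 ≤ G t)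
    (h0 : h 0 = 0) (h'0 : h' 0 = 1) : ∀ t ∈ Ici (0 : ℝ), t ≤ h t := by
  have hmono : MonotoneOn (fun t => h t - t) (Ici 0) :=
    monotoneOn_Ici_of_hasDerivWithinAt_nonneg
      (fun t ht => (sol.hasDerivWithinAt t ht).sub (hasDerivWithinAt_id t _))
      fun t ht => sub_nonneg.2 (sol.one_le_deriv hG h0 h'0 t (mem_Ici_of_Ioi ht))
  intro t ht
  simpa [h0] using hmono self_mem_Ici ht ht

theorem wronskian_eq (sol : IsSolutionOnIci G h h') (sol₂ : IsSolutionOnIci G h₂ h₂') :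
    ∀ t ∈ Ici (0 : ℝ), h₂ t * h' t - h₂' t * h t = h₂ 0 * h' 0 - h₂' 0 * h 0 := by
  intro t ht
  refine constant_of_has_deriv_right_zero (f := fun t => h₂ t * h' t - h₂' t * h t)
    (b := t) (fun s hs => ?_) (fun s hs => ?_) t (right_mem_Icc.2 ht)
  · exact (((sol₂.continuousOn.mul sol.continuousOn_deriv).sub
      (sol₂.continuousOn_deriv.mul sol.continuousOn)).mono Icc_subset_Ici_self) s hs
  · have hs' : s ∈ Ici (0 : ℝ) := hs.1
    have := ((sol₂.hasDerivWithinAt s hs').mul (sol.hasDerivWithinAt_deriv s hs')).sub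
      ((sol₂.hasDerivWithinAt_deriv s hs').mul (sol.hasDerivWithinAt s hs'))
    exact (this.congr_deriv (by ring)).mono (Ici_subset_Ici.2 hs.1)

theorem hasDerivAt_div_deriv {t : ℝ} (sol : IsSolutionOnIci G h h')
    (sol₂ : IsSolutionOnIci G h₂ h₂') (ht : 0 < t) (hne : h' t ≠ 0)
    (hW : h₂ t * h' t - h₂' t * h t = 1) :
    HasDerivAt (fun s => h₂' s / h' s) (G t / h' t ^ 2) t := by
  refine ((sol₂.hasDerivAt_deriv ht).div (sol.hasDerivAt_deriv ht) hne).congr_deriv ?_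
  linear_combination (G t / h' t ^ 2) * hW

end IsSolutionOnIci

theorem stmt_2_general (G h₁ h₂ : ℝ → ℝ)
    (hGnn : ∀ t ∈ Ici (0 : ℝ), 0 ≤ G t)
    (hh₁ : ContDiffOn ℝ 2 h₁ (Ici 0)) (hh₂ : ContDiffOn ℝ 2 h₂ (Ici 0))
    (ode₁ : ∀ t ∈ Ici (0 : ℝ),
      derivWithin (derivWithin h₁ (Ici 0)) (Ici 0) t = G t * h₁ t)
    (ode₂ : ∀ t ∈ Ici (0 : ℝ),
      derivWithin (derivWithin h₂ (Ici 0)) (Ici 0) t = G t * h₂ t)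
    (h₁0 : h₁ 0 = 0) (h₁'0 : derivWithin h₁ (Ici 0) 0 = 1)
    (h₂0 : h₂ 0 = 1) (h₂'0 : derivWithin h₂ (Ici 0) 0 = 0)
    (hint : IntegrableOn G (Ioi 0)) :
    ∃ L : ℝ,
      Tendsto (fun t => h₂ t / h₁ t) atTop (nhds L) ∧
      Tendsto (fun t => derivWithin h₂ (Ici 0) t / derivWithin h₁ (Ici 0) t)
        atTop (nhds L) ∧
      L ≤ ∫ t in Ioi (0 : ℝ), G t := by
  have sol₁ := IsSolutionOnIci.of_contDiffOn hh₁ ode₁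
  have sol₂ := IsSolutionOnIci.of_contDiffOn hh₂ ode₂
  set h₁' := derivWithin h₁ (Ici 0)
  set h₂' := derivWithin h₂ (Ici 0)
  have one_le_h₁' := sol₁.one_le_deriv hGnn h₁0 h₁'0
  have h₁'_ne : ∀ t ∈ Ici (0 : ℝ), h₁' t ≠ 0 := fun t ht =>
    (zero_lt_one.trans_le (one_le_h₁' t ht)).ne'
  have hW : ∀ t ∈ Ici (0 : ℝ), h₂ t * h₁' t - h₂' t * h₁ t = 1 := fun t ht => by
    rw [sol₁.wronskian_eq sol₂ t ht, h₁0, h₁'0, h₂0, h₂'0]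
    ring
  have hq_int : IntegrableOn (fun t => G t / h₁' t ^ 2) (Ioi 0) :=
    hint.div_of_one_le (((sol₁.continuousOn_deriv.pow 2).mono Ioi_subset_Ici_self)
      |>.aestronglyMeasurable measurableSet_Ioi) measurableSet_Ioi
      fun t ht => one_le_pow₀ (one_le_h₁' t (mem_Ici_of_Ioi ht))
  have hq : Tendsto (fun t => h₂' t / h₁' t) atTop (𝓝 (∫ t in Ioi 0, G t / h₁' t ^ 2)) := by
    simpa [h₂'0] using tendsto_add_integral_Ioi_of_hasDerivAt (f := fun t => h₂' t / h₁' t)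
      ((sol₂.continuousOn_deriv.div sol₁.continuousOn_deriv h₁'_ne) 0 self_mem_Ici)
      (fun t ht => sol₁.hasDerivAt_div_deriv sol₂ ht (h₁'_ne t (mem_Ici_of_Ioi ht))
        (hW t (mem_Ici_of_Ioi ht))) hq_int
  refine ⟨_, ?_, hq, setIntegral_mono_on hq_int hint measurableSet_Ioi fun t ht =>
    div_le_self (hGnn t (mem_Ici_of_Ioi ht)) (one_le_pow₀ (one_le_h₁' t (mem_Ici_of_Ioi ht)))⟩
  simpa using hq.add (tendsto_div_sub_div_of_wronskian_eq_one
    (sol₁.self_le hGnn h₁0 h₁'0) one_le_h₁' hW)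

/-- Lemma 2.6: if `∫₀^∞ G < ∞` then `lim h₂/h₁ = lim h₂'/h₁' ≤ ∫₀^∞ G`. -/
theorem stmt_2 (G h₁ h₂ : ℝ → ℝ)
    (hG : ContinuousOn G (Ici 0)) (hGnn : ∀ t ∈ Ici (0 : ℝ), 0 ≤ G t)
    (hh₁ : ContDiffOn ℝ 2 h₁ (Ici 0)) (hh₂ : ContDiffOn ℝ 2 h₂ (Ici 0))
    (ode₁ : ∀ t ∈ Ici (0 : ℝ),
      derivWithin (derivWithin h₁ (Ici 0)) (Ici 0) t = G t * h₁ t)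
    (ode₂ : ∀ t ∈ Ici (0 : ℝ),
      derivWithin (derivWithin h₂ (Ici 0)) (Ici 0) t = G t * h₂ t)
    (h₁0 : h₁ 0 = 0) (h₁'0 : derivWithin h₁ (Ici 0) 0 = 1)
    (h₂0 : h₂ 0 = 1) (h₂'0 : derivWithin h₂ (Ici 0) 0 = 0)
    (hint : IntegrableOn G (Ioi 0)) :
    ∃ L : ℝ,
      Tendsto (fun t => h₂ t / h₁ t) atTop (nhds L) ∧
      Tendsto (fun t => derivWithin h₂ (Ici 0) t / derivWithin h₁ (Ici 0) t)
        atTop (nhds L) ∧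
      L ≤ ∫ t in Ioi (0 : ℝ), G t :=
  stmt_2_general G h₁ h₂ hGnn hh₁ hh₂ ode₁ ode₂ h₁0 h₁'0 h₂0 h₂'0 hint
end

section
/- For every t ≥ 0 one has (h₂'/h₁')'(t) = G(t)/h₁'(t)² ≥ 0, and if in addition ∫₀^∞ G(s) ds < ∞, then h₂'(t)/h₁'(t) ≤ ∫₀^∞ G(s) ds for all t ≥ 0. -/
open Set MeasureTheory

/-!
The Wronskian `h₂ h₁' - h₂' h₁` of two solutions of `h'' = G h` is constant, here equal to `1`,
so `(h₂'/h₁')' = G (h₂ h₁' - h₂' h₁) / h₁'² = G / h₁'²`. Since `G ≥ 0`, `h₁' ≥ 1` for all time: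
before a first zero of `h₁'`, `h₁` increases from `0`, so `h₁'' = G h₁ ≥ 0` and `h₁'` cannot have
dropped below its initial value `1`. Hence `(h₂'/h₁')' ≤ G`, and integrating from `0`, where
`h₂'/h₁'` vanishes, bounds `h₂'/h₁'` by `∫₀^∞ G`.
-/

lemma hasDerivWithinAt_derivWithin_derivWithin {f : ℝ → ℝ} {s : Set ℝ} (hs : UniqueDiffOn ℝ s)
    (hf : ContDiffOn ℝ 2 f s) {t : ℝ} (ht : t ∈ s) :
    HasDerivWithinAt (derivWithin f s) (derivWithin (derivWithin f s) s t) s t :=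
  ((hf.derivWithin hs (by norm_num) : ContDiffOn ℝ 1 _ s).differentiableOn one_ne_zero t
    ht).hasDerivWithinAt

lemma monotoneOn_of_hasDerivWithinAt_Ici_nonneg {φ φ' : ℝ → ℝ} {a : ℝ} {s : Set ℝ}
    (hs : s ⊆ Ici a) (hconv : Convex ℝ s) (hφ : ∀ t ∈ s, HasDerivWithinAt φ (φ' t) (Ici a) t)
    (hφ' : ∀ t ∈ interior s, 0 ≤ φ' t) : MonotoneOn φ s := by
  refine monotoneOn_of_hasDerivWithinAt_nonneg hconv
    (fun t ht => (hφ t ht).continuousWithinAt.mono hs) (fun t ht => ?_) hφ'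
  have hta : t ∈ Ioi a := by simpa only [interior_Ici] using interior_mono hs ht
  exact ((hφ t (interior_subset ht)).hasDerivAt (Ici_mem_nhds hta)).hasDerivWithinAt

lemma sub_le_integral_Ioi_of_hasDerivWithinAt_le {q q' G : ℝ → ℝ} {a t : ℝ}
    (hq : ∀ u ∈ Ici a, HasDerivWithinAt q (q' u) (Ici a) u) (hq' : ∀ u ∈ Ioi a, q' u ≤ G u)
    (hGnn : ∀ u ∈ Ioi a, 0 ≤ G u) (hGint : IntegrableOn G (Ioi a)) (hat : a ≤ t) :
    q t - q a ≤ ∫ u in Ioi a, G u :=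
  calc q t - q a ≤ ∫ u in a..t, G u :=
        intervalIntegral.sub_le_integral_of_hasDeriv_right_of_le hat
          (fun u hu => (hq u hu.1).continuousWithinAt.mono Icc_subset_Ici_self)
          (fun u hu => (hq u hu.1.le).mono (Ioi_subset_Ici hu.1.le))
          (((integrableOn_Ici_iff_integrableOn_Ioi).2 hGint).mono_set Icc_subset_Ici_self)
          (fun u hu => hq' u hu.1)
    _ = ∫ u in Ioc a t, G u := intervalIntegral.integral_of_le hat
    _ ≤ ∫ u in Ioi a, G u :=
        setIntegral_mono_set hGint (ae_restrict_of_forall_mem measurableSet_Ioi hGnn)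
          Ioc_subset_Ioi_self.eventuallyLE

section LinearODE

variable {G h h' : ℝ → ℝ}

lemma monotoneOn_deriv_of_ode {s : Set ℝ} (hGnn : ∀ t ∈ Ici (0 : ℝ), 0 ≤ G t)
    (hh : ∀ t ∈ Ici (0 : ℝ), HasDerivWithinAt h (h' t) (Ici 0) t)
    (hh' : ∀ t ∈ Ici (0 : ℝ), HasDerivWithinAt h' (G t * h t) (Ici 0) t)
    (hs : s ⊆ Ici 0) (hconv : Convex ℝ s) (h0s : 0 ∈ s) (h0 : 0 ≤ h 0)
    (hpos : ∀ t ∈ interior s, 0 ≤ h' t) : MonotoneOn h' s := by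
  have hmono : MonotoneOn h s :=
    monotoneOn_of_hasDerivWithinAt_Ici_nonneg hs hconv (fun t ht => hh t (hs ht)) hpos
  refine monotoneOn_of_hasDerivWithinAt_Ici_nonneg hs hconv (fun t ht => hh' t (hs ht))
    fun t ht => ?_
  replace ht := interior_subset ht
  exact mul_nonneg (hGnn t (hs ht)) (h0.trans (hmono h0s ht (hs ht)))

lemma deriv_pos_of_ode (hGnn : ∀ t ∈ Ici (0 : ℝ), 0 ≤ G t)
    (hh : ∀ t ∈ Ici (0 : ℝ), HasDerivWithinAt h (h' t) (Ici 0) t)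
    (hh' : ∀ t ∈ Ici (0 : ℝ), HasDerivWithinAt h' (G t * h t) (Ici 0) t)
    (h0 : 0 ≤ h 0) (h'0 : 0 < h' 0) : ∀ t ∈ Ici (0 : ℝ), 0 < h' t := by
  by_contra! ⟨t, ht, ht'⟩
  set Z := Ici (0 : ℝ) ∩ h' ⁻¹' Iic 0
  have hZbdd : BddBelow Z := ⟨0, fun _ hz => hz.1⟩
  have hZ : IsClosed Z :=
    ContinuousOn.preimage_isClosed_of_isClosed (fun u hu => (hh' u hu).continuousWithinAt)
      isClosed_Ici isClosed_Iic
  obtain ⟨hT, hT'⟩ : sInf Z ∈ Z := hZ.csInf_mem ⟨t, ht, ht'⟩ hZbdd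
  have hmono : MonotoneOn h' (Icc 0 (sInf Z)) := by
    refine monotoneOn_deriv_of_ode hGnn hh hh' Icc_subset_Ici_self (convex_Icc _ _)
      (left_mem_Icc.2 hT) h0 fun u hu => ?_
    rw [interior_Icc] at hu
    by_contra! hu'
    exact (csInf_le hZbdd ⟨hu.1.le, hu'.le⟩).not_gt hu.2
  have := hmono (left_mem_Icc.2 hT) (right_mem_Icc.2 hT) hT
  exact (h'0.trans_le this).not_ge hT'

lemma le_deriv_of_ode (hGnn : ∀ t ∈ Ici (0 : ℝ), 0 ≤ G t)
    (hh : ∀ t ∈ Ici (0 : ℝ), HasDerivWithinAt h (h' t) (Ici 0) t)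
    (hh' : ∀ t ∈ Ici (0 : ℝ), HasDerivWithinAt h' (G t * h t) (Ici 0) t)
    (h0 : 0 ≤ h 0) (h'0 : 0 < h' 0) : ∀ t ∈ Ici (0 : ℝ), h' 0 ≤ h' t := fun _ ht =>
  monotoneOn_deriv_of_ode hGnn hh hh' subset_rfl (convex_Ici 0) self_mem_Ici h0
    (fun u hu => (deriv_pos_of_ode hGnn hh hh' h0 h'0 u (interior_subset hu)).le)
    self_mem_Ici ht ht

lemma wronskian_eq_of_ode {h₁ h₁' h₂ h₂' : ℝ → ℝ}
    (hh₁ : ∀ t ∈ Ici (0 : ℝ), HasDerivWithinAt h₁ (h₁' t) (Ici 0) t)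
    (hh₁' : ∀ t ∈ Ici (0 : ℝ), HasDerivWithinAt h₁' (G t * h₁ t) (Ici 0) t)
    (hh₂ : ∀ t ∈ Ici (0 : ℝ), HasDerivWithinAt h₂ (h₂' t) (Ici 0) t)
    (hh₂' : ∀ t ∈ Ici (0 : ℝ), HasDerivWithinAt h₂' (G t * h₂ t) (Ici 0) t) :
    ∀ t ∈ Ici (0 : ℝ), h₂ t * h₁' t - h₂' t * h₁ t = h₂ 0 * h₁' 0 - h₂' 0 * h₁ 0 := by
  have hW : ∀ u ∈ Ici (0 : ℝ),
      HasDerivWithinAt (fun s => h₂ s * h₁' s - h₂' s * h₁ s) 0 (Ici 0) u := by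
    intro u hu
    refine (((hh₂ u hu).mul (hh₁' u hu)).sub ((hh₂' u hu).mul (hh₁ u hu))).congr_deriv ?_
    ring
  exact fun t ht => constant_of_has_deriv_right_zero
    (fun u hu => (hW u hu.1).continuousWithinAt.mono Icc_subset_Ici_self)
    (fun u hu => (hW u hu.1).mono (Ici_subset_Ici.2 hu.1)) t ⟨ht, le_rfl⟩

lemma hasDerivWithinAt_div_of_wronskian_eq_one {h₁ h₁' h₂ h₂' : ℝ → ℝ} {s : Set ℝ} {t : ℝ}
    (hh₁' : HasDerivWithinAt h₁' (G t * h₁ t) s t) (hh₂' : HasDerivWithinAt h₂' (G t * h₂ t) s t)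
    (hne : h₁' t ≠ 0) (hW : h₂ t * h₁' t - h₂' t * h₁ t = 1) :
    HasDerivWithinAt (fun u => h₂' u / h₁' u) (G t / h₁' t ^ 2) s t := by
  refine (hh₂'.div hh₁' hne).congr_deriv ?_
  congr 1
  linear_combination G t * hW

end LinearODE

theorem stmt_5_general (G h₁ h₂ : ℝ → ℝ)
    (hGnn : ∀ t ∈ Ici (0 : ℝ), 0 ≤ G t)
    (hh₁ : ContDiffOn ℝ 2 h₁ (Ici 0)) (hh₂ : ContDiffOn ℝ 2 h₂ (Ici 0))
    (ode₁ : ∀ t ∈ Ici (0 : ℝ),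
      derivWithin (derivWithin h₁ (Ici 0)) (Ici 0) t = G t * h₁ t)
    (ode₂ : ∀ t ∈ Ici (0 : ℝ),
      derivWithin (derivWithin h₂ (Ici 0)) (Ici 0) t = G t * h₂ t)
    (h₁0 : h₁ 0 = 0) (h₁'0 : derivWithin h₁ (Ici 0) 0 = 1)
    (h₂0 : h₂ 0 = 1) (h₂'0 : derivWithin h₂ (Ici 0) 0 = 0)
    :
    (∀ t ∈ Ici (0 : ℝ),
      derivWithin (fun s => derivWithin h₂ (Ici 0) s / derivWithin h₁ (Ici 0) s)
          (Ici 0) t = G t / (derivWithin h₁ (Ici 0) t) ^ 2 ∧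
      0 ≤ G t / (derivWithin h₁ (Ici 0) t) ^ 2) ∧
    (IntegrableOn G (Ioi 0) →
      ∀ t ∈ Ici (0 : ℝ),
        derivWithin h₂ (Ici 0) t / derivWithin h₁ (Ici 0) t ≤
          ∫ s in Ioi (0 : ℝ), G s) := by
  set f₁ := derivWithin h₁ (Ici 0)
  set f₂ := derivWithin h₂ (Ici 0)
  have hd₁ : ∀ t ∈ Ici (0 : ℝ), HasDerivWithinAt h₁ (f₁ t) (Ici 0) t := fun t ht =>
    (hh₁.differentiableOn two_ne_zero t ht).hasDerivWithinAt
  have hd₂ : ∀ t ∈ Ici (0 : ℝ), HasDerivWithinAt h₂ (f₂ t) (Ici 0) t := fun t ht =>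
    (hh₂.differentiableOn two_ne_zero t ht).hasDerivWithinAt
  have hd₁' : ∀ t ∈ Ici (0 : ℝ), HasDerivWithinAt f₁ (G t * h₁ t) (Ici 0) t := fun t ht =>
    ode₁ t ht ▸ hasDerivWithinAt_derivWithin_derivWithin (uniqueDiffOn_Ici 0) hh₁ ht
  have hd₂' : ∀ t ∈ Ici (0 : ℝ), HasDerivWithinAt f₂ (G t * h₂ t) (Ici 0) t := fun t ht =>
    ode₂ t ht ▸ hasDerivWithinAt_derivWithin_derivWithin (uniqueDiffOn_Ici 0) hh₂ ht
  have hf₁ : ∀ t ∈ Ici (0 : ℝ), 1 ≤ f₁ t := h₁'0 ▸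
    le_deriv_of_ode hGnn hd₁ hd₁' h₁0.ge (h₁'0 ▸ one_pos)
  have hW : ∀ t ∈ Ici (0 : ℝ), h₂ t * f₁ t - f₂ t * h₁ t = 1 := fun t ht => by
    rw [wronskian_eq_of_ode hd₁ hd₁' hd₂ hd₂' t ht, h₁0, h₁'0, h₂0, h₂'0]
    norm_num
  have hq : ∀ t ∈ Ici (0 : ℝ),
      HasDerivWithinAt (fun s => f₂ s / f₁ s) (G t / f₁ t ^ 2) (Ici 0) t := fun t ht =>
    hasDerivWithinAt_div_of_wronskian_eq_one (hd₁' t ht) (hd₂' t ht)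
      (one_pos.trans_le (hf₁ t ht)).ne' (hW t ht)
  refine ⟨fun t ht => ⟨(hq t ht).derivWithin (uniqueDiffOn_Ici 0 t ht),
    div_nonneg (hGnn t ht) (sq_nonneg _)⟩, fun hGint t ht => ?_⟩
  have := sub_le_integral_Ioi_of_hasDerivWithinAt_le hq
    (fun s hs => div_le_self (hGnn s (Ioi_subset_Ici_self hs))
      (one_le_pow₀ (hf₁ s (Ioi_subset_Ici_self hs))))
    (fun s hs => hGnn s (Ioi_subset_Ici_self hs)) hGint ht
  simpa [h₁'0, h₂'0] using this

/-- `(h₂'/h₁')'(t) = G(t)/h₁'(t)² ≥ 0` on `[0,∞)`; if moreover `∫₀^∞ G < ∞` then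
`h₂'/h₁' ≤ ∫₀^∞ G` on `[0,∞)`. -/
theorem stmt_5 (G h₁ h₂ : ℝ → ℝ)
    (hG : ContinuousOn G (Ici 0)) (hGnn : ∀ t ∈ Ici (0 : ℝ), 0 ≤ G t)
    (hh₁ : ContDiffOn ℝ 2 h₁ (Ici 0)) (hh₂ : ContDiffOn ℝ 2 h₂ (Ici 0))
    (ode₁ : ∀ t ∈ Ici (0 : ℝ),
      derivWithin (derivWithin h₁ (Ici 0)) (Ici 0) t = G t * h₁ t)
    (ode₂ : ∀ t ∈ Ici (0 : ℝ),
      derivWithin (derivWithin h₂ (Ici 0)) (Ici 0) t = G t * h₂ t)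
    (h₁0 : h₁ 0 = 0) (h₁'0 : derivWithin h₁ (Ici 0) 0 = 1)
    (h₂0 : h₂ 0 = 1) (h₂'0 : derivWithin h₂ (Ici 0) 0 = 0)
    :
    (∀ t ∈ Ici (0 : ℝ),
      derivWithin (fun s => derivWithin h₂ (Ici 0) s / derivWithin h₁ (Ici 0) s)
          (Ici 0) t = G t / (derivWithin h₁ (Ici 0) t) ^ 2 ∧
      0 ≤ G t / (derivWithin h₁ (Ici 0) t) ^ 2) ∧
    (IntegrableOn G (Ioi 0) →
      ∀ t ∈ Ici (0 : ℝ),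
        derivWithin h₂ (Ici 0) t / derivWithin h₁ (Ici 0) t ≤
          ∫ s in Ioi (0 : ℝ), G s) :=
  stmt_5_general G h₁ h₂ hGnn hh₁ hh₂ ode₁ ode₂ h₁0 h₁'0 h₂0 h₂'0
end

section
/- If ∫₀^∞ s·G(s) ds < ∞, then for all t > 0 one has h₁(t) ≤ ∫₀^t exp(∫₀^s τ·G(τ) dτ) ds ≤ t·exp(∫₀^∞ τ·G(τ) dτ). -/
/-!
First `h₁ ≥ 0`: up to the first zero of `h₁'` the solution increases from `h₁ 0 = 0`, so
`h₁'' = G h₁ ≥ 0` there and `h₁' ≥ 1` persists; hence `h₁'` has no zero. Then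
`(t h₁' - h₁)' = t G h₁ ≥ 0` gives `h₁ ≤ t h₁'`, hence `h₁'' ≤ t G h₁'`, and Grönwall (via the
integrating factor `exp (-∫₀ᵗ τ G τ dτ)`) gives `h₁' ≤ exp (∫₀ᵗ τ G τ dτ)`. Integrating yields
the first bound; the second follows from `τ G τ ≥ 0`.
-/

open Set Filter MeasureTheory intervalIntegral

theorem le_of_hasDerivAt_nonneg {f f' : ℝ → ℝ} {a b : ℝ} (hab : a ≤ b)
    (hf : ContinuousOn f (Icc a b)) (hderiv : ∀ x ∈ Ioo a b, HasDerivAt f (f' x) x)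
    (hnonneg : ∀ x ∈ Ioo a b, 0 ≤ f' x) : f a ≤ f b :=
  monotoneOn_of_hasDerivWithinAt_nonneg (convex_Icc a b) hf
    (fun x hx => (hderiv x (by rwa [interior_Icc] at hx)).hasDerivWithinAt)
    (fun x hx => hnonneg x (by rwa [interior_Icc] at hx))
    (left_mem_Icc.2 hab) (right_mem_Icc.2 hab) hab

theorem ContinuousOn.intervalIntegrable_of_Ici {f : ℝ → ℝ} {a b : ℝ}
    (hf : ContinuousOn f (Ici a)) (hab : a ≤ b) : IntervalIntegrable f volume a b :=
  (hf.mono Icc_subset_Ici_self).intervalIntegrable_of_Icc hab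

theorem continuousOn_primitive_Ici {f : ℝ → ℝ} {a : ℝ} (hf : ContinuousOn f (Ici a)) :
    ContinuousOn (fun u => ∫ s in a..u, f s) (Ici a) := by
  intro x hx
  have hax : a ≤ x + 1 := by linarith [mem_Ici.1 hx]
  have hIcc := continuousOn_primitive_interval (μ := volume) (a := a) (b := x + 1)
    ((hf.mono Icc_subset_Ici_self).integrableOn_Icc.mono_set (uIcc_of_le hax).subset)
  rw [uIcc_of_le hax] at hIcc
  refine (hIcc x ⟨hx, by linarith⟩).mono_of_mem_nhdsWithin ?_
  rw [← Ici_inter_Iic]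
  exact inter_mem_nhdsWithin _ (Iic_mem_nhds (by linarith))

theorem hasDerivAt_primitive_of_continuousOn_Ici {f : ℝ → ℝ} {a t : ℝ}
    (hf : ContinuousOn f (Ici a)) (ht : a < t) :
    HasDerivAt (fun u => ∫ s in a..u, f s) (f t) t :=
  integral_hasDerivAt_right
    (hf.intervalIntegrable_of_Ici ht.le)
    ((hf.mono Ioi_subset_Ici_self).stronglyMeasurableAtFilter isOpen_Ioi t ht)
    (hf.continuousAt (Ici_mem_nhds ht))

theorem continuousOn_exp_primitive {G : ℝ → ℝ} (hGc : ContinuousOn G (Ici 0)) :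
    ContinuousOn (fun s => Real.exp (∫ τ in (0 : ℝ)..s, τ * G τ)) (Ici 0) :=
  Real.continuous_exp.comp_continuousOn (continuousOn_primitive_Ici (continuousOn_id.mul hGc))

theorem intervalIntegral_le_setIntegral_Ioi {f : ℝ → ℝ} {a b : ℝ} (hab : a ≤ b)
    (hf : IntegrableOn f (Ioi a)) (hnonneg : ∀ x, a < x → 0 ≤ f x) :
    ∫ x in a..b, f x ≤ ∫ x in Ioi a, f x := by
  rw [integral_of_le hab]
  exact setIntegral_mono_set hf
    ((ae_restrict_iff' measurableSet_Ioi).2 (ae_of_all _ hnonneg))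
    Ioc_subset_Ioi_self.eventuallyLE

/-- `h` solves `h'' = G h` on `[0, ∞)`, `h'` being its derivative. -/
structure SolvesODE (G h h' : ℝ → ℝ) : Prop where
  continuousOn : ContinuousOn h (Ici 0)
  continuousOn_deriv : ContinuousOn h' (Ici 0)
  hasDerivAt : ∀ t, 0 < t → HasDerivAt h (h' t) t
  hasDerivAt_deriv : ∀ t, 0 < t → HasDerivAt h' (G t * h t) t

namespace SolvesODE

variable {G h h' : ℝ → ℝ}

theorem of_contDiffOn (hh : ContDiffOn ℝ 2 h (Ici 0))
    (ode : ∀ t ∈ Ici (0 : ℝ), derivWithin (derivWithin h (Ici 0)) (Ici 0) t = G t * h t) :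
    SolvesODE G h (derivWithin h (Ici 0)) := by
  have hh' : ContDiffOn ℝ 1 (derivWithin h (Ici 0)) (Ici 0) :=
    hh.derivWithin (uniqueDiffOn_Ici 0) (by norm_num)
  refine ⟨hh.continuousOn, hh'.continuousOn, fun t ht => ?_, fun t ht => ?_⟩
  · exact (hh.differentiableOn (by norm_num) t ht.le).hasDerivWithinAt.hasDerivAt
      (Ici_mem_nhds ht)
  · rw [← ode t ht.le]
    exact (hh'.differentiableOn one_ne_zero t ht.le).hasDerivWithinAt.hasDerivAt (Ici_mem_nhds ht)

theorem nonneg_of_deriv_nonneg (hs : SolvesODE G h h') (h0 : h 0 = 0) {T : ℝ} (hT : 0 ≤ T)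
    (hderiv : ∀ s ∈ Ioo 0 T, 0 ≤ h' s) : 0 ≤ h T :=
  h0 ▸ le_of_hasDerivAt_nonneg hT (hs.continuousOn.mono Icc_subset_Ici_self)
    (fun s hs' => hs.hasDerivAt s hs'.1) hderiv

theorem one_le_deriv_of_deriv_nonneg (hs : SolvesODE G h h') (hG : ∀ t, 0 < t → 0 ≤ G t)
    (h0 : h 0 = 0) (h'0 : h' 0 = 1) {T : ℝ} (hT : 0 ≤ T)
    (hderiv : ∀ s ∈ Ioo 0 T, 0 ≤ h' s) : 1 ≤ h' T :=
  h'0 ▸ le_of_hasDerivAt_nonneg hT (hs.continuousOn_deriv.mono Icc_subset_Ici_self)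
    (fun s hs' => hs.hasDerivAt_deriv s hs'.1)
    (fun s hs' => mul_nonneg (hG s hs'.1) (hs.nonneg_of_deriv_nonneg h0 hs'.1.le
      fun r hr => hderiv r ⟨hr.1, hr.2.trans hs'.2⟩))

theorem deriv_pos (hs : SolvesODE G h h') (hG : ∀ t, 0 < t → 0 ≤ G t)
    (h0 : h 0 = 0) (h'0 : h' 0 = 1) {t : ℝ} (ht : 0 ≤ t) : 0 < h' t := by
  by_contra! hle
  set Z := Ici 0 ∩ h' ⁻¹' Iic 0
  have hZ : IsClosed Z :=
    hs.continuousOn_deriv.preimage_isClosed_of_isClosed isClosed_Ici isClosed_Iic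
  have hZbdd : BddBelow Z := ⟨0, fun x hx => hx.1⟩
  have hτ : sInf Z ∈ Z := hZ.csInf_mem ⟨t, ht, hle⟩ hZbdd
  have hpos : ∀ s ∈ Ioo 0 (sInf Z), 0 ≤ h' s := fun s hs' =>
    le_of_not_ge fun hs'' => (csInf_le hZbdd ⟨hs'.1.le, hs''⟩).not_gt hs'.2
  have := hs.one_le_deriv_of_deriv_nonneg hG h0 h'0 hτ.1 hpos
  linarith [show h' (sInf Z) ≤ 0 from hτ.2]

theorem nonneg (hs : SolvesODE G h h') (hG : ∀ t, 0 < t → 0 ≤ G t)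
    (h0 : h 0 = 0) (h'0 : h' 0 = 1) {t : ℝ} (ht : 0 ≤ t) : 0 ≤ h t :=
  hs.nonneg_of_deriv_nonneg h0 ht fun _ hs' => (hs.deriv_pos hG h0 h'0 hs'.1.le).le

theorem le_mul_deriv (hs : SolvesODE G h h') (hG : ∀ t, 0 < t → 0 ≤ G t)
    (h0 : h 0 = 0) (h'0 : h' 0 = 1) {t : ℝ} (ht : 0 ≤ t) : h t ≤ t * h' t := by
  have hmono := le_of_hasDerivAt_nonneg (f := fun s => s * h' s - h s) ht
    (((continuousOn_id.mul hs.continuousOn_deriv).sub hs.continuousOn).mono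
      Icc_subset_Ici_self)
    (fun s hs' => ((hasDerivAt_id s).mul (hs.hasDerivAt_deriv s hs'.1)).sub
      (hs.hasDerivAt s hs'.1))
    (fun s hs' => by
      have := mul_nonneg hs'.1.le (mul_nonneg (hG s hs'.1) (hs.nonneg hG h0 h'0 hs'.1.le))
      simp only [id, one_mul]
      linarith)
  simp only [h0, zero_mul, sub_zero] at hmono
  linarith

theorem deriv_le_exp_primitive (hs : SolvesODE G h h') (hGc : ContinuousOn G (Ici 0))
    (hG : ∀ t, 0 < t → 0 ≤ G t) (h0 : h 0 = 0) (h'0 : h' 0 = 1) {t : ℝ} (ht : 0 ≤ t) :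
    h' t ≤ Real.exp (∫ τ in (0 : ℝ)..t, τ * G τ) := by
  set I := fun s : ℝ => ∫ τ in (0 : ℝ)..s, τ * G τ
  have hf : ContinuousOn (fun τ => τ * G τ) (Ici 0) := continuousOn_id.mul hGc
  have hI : ∀ s, 0 < s → HasDerivAt I (s * G s) s := fun s hs' =>
    hasDerivAt_primitive_of_continuousOn_Ici hf hs'
  have hanti := le_of_hasDerivAt_nonneg (f := fun s => -(h' s * Real.exp (-I s))) ht
    ((hs.continuousOn_deriv.mul
      (Real.continuous_exp.comp_continuousOn (continuousOn_primitive_Ici hf).neg)).neg.mono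
      Icc_subset_Ici_self)
    (fun s hs' => ((hs.hasDerivAt_deriv s hs'.1).mul (hI s hs'.1).neg.exp).neg)
    (fun s hs' => by
      have := mul_nonneg (Real.exp_pos (-I s)).le
        (mul_nonneg (hG s hs'.1) (sub_nonneg.2 (hs.le_mul_deriv hG h0 h'0 hs'.1.le)))
      simp only [Pi.neg_apply]
      linarith)
  have hI0 : I 0 = 0 := integral_same
  simp only [h'0, hI0, neg_zero, Real.exp_zero, mul_one, neg_le_neg_iff] at hanti
  calc h' t = h' t * Real.exp (-I t) * Real.exp (I t) := by
        rw [mul_assoc, ← Real.exp_add, neg_add_cancel, Real.exp_zero, mul_one]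
    _ ≤ Real.exp (I t) := by
        simpa using mul_le_mul_of_nonneg_right hanti (Real.exp_pos (I t)).le

theorem le_integral_exp_primitive (hs : SolvesODE G h h') (hGc : ContinuousOn G (Ici 0))
    (hG : ∀ t, 0 < t → 0 ≤ G t) (h0 : h 0 = 0) (h'0 : h' 0 = 1) {t : ℝ} (ht : 0 ≤ t) :
    h t ≤ ∫ s in (0 : ℝ)..t, Real.exp (∫ τ in (0 : ℝ)..s, τ * G τ) := by
  have hFTC : ∫ s in (0 : ℝ)..t, h' s = h t :=
    (integral_eq_sub_of_hasDeriv_right_of_le ht (hs.continuousOn.mono Icc_subset_Ici_self)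
      (fun s hs' => (hs.hasDerivAt s hs'.1).hasDerivWithinAt)
      (hs.continuousOn_deriv.intervalIntegrable_of_Ici ht)).trans (by rw [h0, sub_zero])
  rw [← hFTC]
  exact integral_mono_on ht (hs.continuousOn_deriv.intervalIntegrable_of_Ici ht)
    ((continuousOn_exp_primitive hGc).intervalIntegrable_of_Ici ht)
    fun s hs' => hs.deriv_le_exp_primitive hGc hG h0 h'0 hs'.1

end SolvesODE

theorem integral_exp_primitive_le {G : ℝ → ℝ} (hGc : ContinuousOn G (Ici 0))
    (hG : ∀ t, 0 < t → 0 ≤ G t) (hint : IntegrableOn (fun s => s * G s) (Ioi 0))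
    {t : ℝ} (ht : 0 ≤ t) :
    ∫ s in (0 : ℝ)..t, Real.exp (∫ τ in (0 : ℝ)..s, τ * G τ) ≤
      t * Real.exp (∫ τ in Ioi (0 : ℝ), τ * G τ) :=
  calc ∫ s in (0 : ℝ)..t, Real.exp (∫ τ in (0 : ℝ)..s, τ * G τ)
      ≤ ∫ _ in (0 : ℝ)..t, Real.exp (∫ τ in Ioi (0 : ℝ), τ * G τ) :=
        integral_mono_on ht ((continuousOn_exp_primitive hGc).intervalIntegrable_of_Ici ht)
          intervalIntegrable_const fun s hs => Real.exp_le_exp.2 <|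
            intervalIntegral_le_setIntegral_Ioi hs.1 hint fun x hx => mul_nonneg hx.le (hG x hx)
    _ = t * Real.exp (∫ τ in Ioi (0 : ℝ), τ * G τ) := by
        rw [intervalIntegral.integral_const, smul_eq_mul, sub_zero]

/-- If `∫₀^∞ s G(s) ds < ∞` then for all `t > 0`,
`h₁(t) ≤ ∫₀^t exp(∫₀^s τ G(τ) dτ) ds ≤ t exp(∫₀^∞ τ G(τ) dτ)`. -/
theorem stmt_8 (G h₁ : ℝ → ℝ)
    (hG : ContinuousOn G (Ici 0)) (hGnn : ∀ t ∈ Ici (0 : ℝ), 0 ≤ G t)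
    (hh₁ : ContDiffOn ℝ 2 h₁ (Ici 0))
    (ode₁ : ∀ t ∈ Ici (0 : ℝ),
      derivWithin (derivWithin h₁ (Ici 0)) (Ici 0) t = G t * h₁ t)
    (h₁0 : h₁ 0 = 0) (h₁'0 : derivWithin h₁ (Ici 0) 0 = 1)
    (hint : IntegrableOn (fun s => s * G s) (Ioi 0)) :
    ∀ t ∈ Ioi (0 : ℝ),
      h₁ t ≤ (∫ s in (0 : ℝ)..t, Real.exp (∫ τ in (0 : ℝ)..s, τ * G τ)) ∧
      (∫ s in (0 : ℝ)..t, Real.exp (∫ τ in (0 : ℝ)..s, τ * G τ)) ≤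
        t * Real.exp (∫ τ in Ioi (0 : ℝ), τ * G τ) := by
  intro t ht
  have hGpos : ∀ t, 0 < t → 0 ≤ G t := fun t ht => hGnn t ht.le
  exact ⟨(SolvesODE.of_contDiffOn hh₁ ode₁).le_integral_exp_primitive hG hGpos h₁0 h₁'0 ht.le,
    integral_exp_primitive_le hG hGpos hint ht.le⟩
end

section
/- For any real σ with 0 ≤ σ < 1 and any integer m ≥ 1 one has lim_{r→∞} σ·h(σr)^m/h(r)^m = σ^{m+1}; equivalently, lim_{r→∞} (1 − σ·h(σr)^m/h(r)^m) = 1 − σ^{m+1}. -/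
open Set Filter MeasureTheory Topology

/-!
Since `λ ≥ 0`, the equation `h'' = λ h` keeps `h' ≥ 1` and `h t ≥ t` for as long as they hold,
so a continuity argument gives both on `[0, ∞)`. Then `t h' - h` is nondecreasing (its derivative
is `t λ h ≥ 0`), so `h ≤ t h'`; this makes `h / t` nondecreasing and gives
`(log h')' = λ h / h' ≤ t λ`, whence `h' ≤ exp b₀`. So `h t / t` increases to a limit `L ≥ 1`,
and `σ h(σr)ᵐ / h(r)ᵐ = σ (σ · (h(σr)/(σr)) / (h r / r))ᵐ → σ (σ L / L)ᵐ = σ^{m+1}`.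
-/

theorem monotoneOn_of_forall_hasDerivWithinAt_nonneg {f f' : ℝ → ℝ} {D S : Set ℝ}
    (hD : Convex ℝ D) (hDS : D ⊆ S) (hf : ∀ t ∈ D, HasDerivWithinAt f (f' t) S t)
    (hf' : ∀ t ∈ interior D, 0 ≤ f' t) : MonotoneOn f D :=
  monotoneOn_of_hasDerivWithinAt_nonneg hD
    (fun t ht => (hf t ht).continuousWithinAt.mono hDS)
    (fun t ht => (hf t (interior_subset ht)).mono (interior_subset.trans hDS)) hf'

theorem MonotoneOn.exists_tendsto_atTop {f : ℝ → ℝ} {a : ℝ} (hf : MonotoneOn f (Ici a))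
    (hbdd : BddAbove (f '' Ici a)) : ∃ L, Tendsto f atTop (𝓝 L) := by
  have hmono : Monotone fun t => f (max t a) := fun s t hst =>
    hf (le_max_right s a) (le_max_right t a) (max_le_max hst le_rfl)
  have hbdd' : BddAbove (range fun t => f (max t a)) :=
    hbdd.mono (range_subset_iff.2 fun t => mem_image_of_mem f (le_max_right t a))
  exact ⟨_, (tendsto_atTop_ciSup hmono hbdd').congr'
    ((eventually_ge_atTop a).mono fun t ht => by simp only [max_eq_left ht])⟩

variable {lam h g : ℝ → ℝ}

theorem self_le_and_one_le_deriv_on_Icc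
    (hh : ∀ t ∈ Ici (0 : ℝ), HasDerivWithinAt h (g t) (Ici 0) t)
    (hg : ∀ t ∈ Ici (0 : ℝ), HasDerivWithinAt g (lam t * h t) (Ici 0) t)
    (hlam : ∀ t ∈ Ici (0 : ℝ), 0 ≤ lam t) {x z : ℝ} (hx : 0 ≤ x)
    (hgpos : ∀ u ∈ Icc x z, 0 < g u) (hhx : x ≤ h x) (hgx : 1 ≤ g x) :
    ∀ u ∈ Icc x z, u ≤ h u ∧ 1 ≤ g u := by
  intro u hu
  have hsub : Icc x z ⊆ Ici 0 := fun v hv => hx.trans hv.1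
  have hxI : x ∈ Icc x z := ⟨le_rfl, hu.1.trans hu.2⟩
  have h_mono : MonotoneOn h (Icc x z) :=
    monotoneOn_of_forall_hasDerivWithinAt_nonneg (convex_Icc x z) hsub
      (fun t ht => hh t (hsub ht)) (fun t ht => (hgpos t (interior_subset ht)).le)
  have g_mono : MonotoneOn g (Icc x z) :=
    monotoneOn_of_forall_hasDerivWithinAt_nonneg (convex_Icc x z) hsub
      (fun t ht => hg t (hsub ht)) fun t ht =>
        mul_nonneg (hlam t (hsub (interior_subset ht)))
          (hx.trans (hhx.trans (h_mono hxI (interior_subset ht) (interior_subset ht).1)))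
  have hg1 : ∀ v ∈ Icc x z, 1 ≤ g v := fun v hv => hgx.trans (g_mono hxI hv hv.1)
  have hsub_mono : MonotoneOn (fun v => h v - v) (Icc x z) :=
    monotoneOn_of_forall_hasDerivWithinAt_nonneg (convex_Icc x z) hsub
      (fun t ht => (hh t (hsub ht)).sub (hasDerivWithinAt_id t _))
      (fun t ht => sub_nonneg.2 (hg1 t (interior_subset ht)))
  exact ⟨by linarith [hsub_mono hxI hu hu.1], hg1 u hu⟩

theorem self_le_and_one_le_deriv
    (hh : ∀ t ∈ Ici (0 : ℝ), HasDerivWithinAt h (g t) (Ici 0) t)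
    (hg : ∀ t ∈ Ici (0 : ℝ), HasDerivWithinAt g (lam t * h t) (Ici 0) t)
    (hlam : ∀ t ∈ Ici (0 : ℝ), 0 ≤ lam t) (h0 : h 0 = 0) (g0 : g 0 = 1) :
    ∀ t ∈ Ici (0 : ℝ), t ≤ h t ∧ 1 ≤ g t := by
  intro b hb
  have hhc : ContinuousOn h (Ici 0) := fun t ht => (hh t ht).continuousWithinAt
  have hgc : ContinuousOn g (Ici 0) := fun t ht => (hg t ht).continuousWithinAt
  let s := {t : ℝ | t ≤ h t ∧ 1 ≤ g t}
  have hclosed : IsClosed (s ∩ Icc 0 b) := by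
    have : s ∩ Icc 0 b = {t ∈ Icc 0 b | t ≤ h t} ∩ {t ∈ Icc 0 b | 1 ≤ g t} := by
      ext; simp only [s, mem_inter_iff, mem_ofPred_eq]; tauto
    rw [this]
    exact (isClosed_Icc.isClosed_le continuousOn_id (hhc.mono Icc_subset_Ici_self)).inter
      (isClosed_Icc.isClosed_le continuousOn_const (hgc.mono Icc_subset_Ici_self))
  refine hclosed.Icc_subset_of_forall_mem_nhdsWithin (by simp [s, h0, g0]) ?_ ⟨hb, le_rfl⟩
  rintro x ⟨⟨hhx, hgx⟩, hx, -⟩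
  have hgpos : ∀ᶠ u in 𝓝[>] x, 0 < g u :=
    nhdsWithin_mono _ (Ioi_subset_Ici hx)
      ((hgc x hx).eventually (eventually_gt_nhds (by linarith)))
  obtain ⟨z, hxz, hz⟩ := mem_nhdsGT_iff_exists_Ioc_subset.1 hgpos
  refine mem_nhdsGT_iff_exists_Ioc_subset.2 ⟨z, hxz, fun u hu =>
    self_le_and_one_le_deriv_on_Icc hh hg hlam hx (fun v hv => ?_) hhx hgx u
      (Ioc_subset_Icc_self hu)⟩
  rcases hv.1.eq_or_lt with rfl | hv'
  · linarith
  · exact hz ⟨hv', hv.2⟩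

theorem le_mul_deriv
    (hh : ∀ t ∈ Ici (0 : ℝ), HasDerivWithinAt h (g t) (Ici 0) t)
    (hg : ∀ t ∈ Ici (0 : ℝ), HasDerivWithinAt g (lam t * h t) (Ici 0) t)
    (hlam : ∀ t ∈ Ici (0 : ℝ), 0 ≤ lam t) (h0 : h 0 = 0)
    (hnn : ∀ t ∈ Ici (0 : ℝ), 0 ≤ h t) :
    ∀ t ∈ Ici (0 : ℝ), h t ≤ t * g t := by
  have hmono : MonotoneOn (fun t => t * g t - h t) (Ici 0) :=
    monotoneOn_of_forall_hasDerivWithinAt_nonneg (f' := fun t => t * (lam t * h t))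
      (convex_Ici 0) subset_rfl
      (fun t ht => (((hasDerivWithinAt_id t _).mul (hg t ht)).sub (hh t ht)).congr_deriv
        (by simp only [id, one_mul]; ring))
      fun t ht => mul_nonneg (interior_subset ht)
        (mul_nonneg (hlam t (interior_subset ht)) (hnn t (interior_subset ht)))
  intro t ht
  have := hmono self_mem_Ici ht ht
  simp only [h0, zero_mul, sub_zero] at this
  linarith

theorem deriv_le_exp_integral
    (hg : ∀ t ∈ Ici (0 : ℝ), HasDerivWithinAt g (lam t * h t) (Ici 0) t)
    (hlam : ∀ t ∈ Ici (0 : ℝ), 0 ≤ lam t) (hint : IntegrableOn (fun s => s * lam s) (Ioi 0))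
    (g0 : g 0 = 1) (hgpos : ∀ t ∈ Ici (0 : ℝ), 0 < g t)
    (hle : ∀ t ∈ Ici (0 : ℝ), h t ≤ t * g t) :
    ∀ t ∈ Ici (0 : ℝ), g t ≤ Real.exp (∫ s in Ioi 0, s * lam s) := by
  intro b hb
  have hgc : ContinuousOn g (Ici 0) := fun t ht => (hg t ht).continuousWithinAt
  have hlog : Real.log (g b) ≤ ∫ s in (0 : ℝ)..b, s * lam s := by
    simpa [g0] using intervalIntegral.sub_le_integral_of_hasDeriv_right_of_le hb
      ((hgc.mono Icc_subset_Ici_self).log fun t ht => (hgpos t ht.1).ne')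
      (fun t ht => ((hg t ht.1.le).log (hgpos t ht.1.le).ne').mono (Ioi_subset_Ici ht.1.le))
      ((integrableOn_Icc_iff_integrableOn_Ioc (f := fun s => s * lam s)).2
        (hint.mono_set Ioc_subset_Ioi_self))
      fun t ht => by
        rw [div_le_iff₀ (hgpos t ht.1.le)]
        calc lam t * h t ≤ lam t * (t * g t) :=
              mul_le_mul_of_nonneg_left (hle t ht.1.le) (hlam t ht.1.le)
          _ = t * lam t * g t := by ring
  have hint_le : ∫ s in (0 : ℝ)..b, s * lam s ≤ ∫ s in Ioi 0, s * lam s := by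
    rw [intervalIntegral.integral_of_le hb]
    exact setIntegral_mono_set hint ((ae_restrict_iff' measurableSet_Ioi).2
      (ae_of_all _ fun s hs => mul_nonneg (le_of_lt hs) (hlam s (Ioi_subset_Ici_self hs))))
      Ioc_subset_Ioi_self.eventuallyLE
  exact (Real.log_le_iff_le_exp (hgpos b hb)).1 (hlog.trans hint_le)

theorem monotoneOn_div_self (hh : ∀ t ∈ Ioi (0 : ℝ), HasDerivWithinAt h (g t) (Ioi 0) t)
    (hle : ∀ t ∈ Ioi (0 : ℝ), h t ≤ t * g t) : MonotoneOn (fun t => h t / t) (Ioi 0) :=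
  monotoneOn_of_forall_hasDerivWithinAt_nonneg (convex_Ioi 0) subset_rfl
    (fun t ht => (hh t ht).div (hasDerivWithinAt_id t _) (ne_of_gt ht))
    fun t ht => div_nonneg (by simp only [mul_one]; linarith [hle t (interior_subset ht)])
      (sq_nonneg t)

theorem tendsto_mul_pow_div_pow {L : ℝ} (hL : L ≠ 0)
    (hlim : Tendsto (fun t => h t / t) atTop (𝓝 L)) {σ : ℝ} (hσ : 0 ≤ σ) (m : ℕ) :
    Tendsto (fun r => σ * h (σ * r) ^ m / h r ^ m) atTop (𝓝 (σ ^ (m + 1))) := by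
  rcases hσ.eq_or_lt with rfl | hσpos
  · simp
  have hratio : Tendsto (fun r => σ * (h (σ * r) / (σ * r)) / (h r / r)) atTop
      (𝓝 (σ * L / L)) :=
    (tendsto_const_nhds.mul (hlim.comp (tendsto_id.const_mul_atTop hσpos))).div hlim hL
  have := (tendsto_const_nhds (x := σ)).mul (hratio.pow m)
  rw [mul_div_cancel_right₀ _ hL, ← pow_succ'] at this
  refine this.congr' ((eventually_gt_atTop 0).mono fun r hr => ?_)
  field_simp
  rw [div_pow]

theorem stmt_14_general (lam h : ℝ → ℝ)
    (hlamnn : ∀ t ∈ Ici (0 : ℝ), 0 ≤ lam t)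
    (hb₀ : IntegrableOn (fun s => s * lam s) (Ioi 0))
    (hh : ContDiffOn ℝ 2 h (Ici 0))
    (ode : ∀ t ∈ Ici (0 : ℝ),
      derivWithin (derivWithin h (Ici 0)) (Ici 0) t = lam t * h t)
    (h0 : h 0 = 0) (h'0 : derivWithin h (Ici 0) 0 = 1)
    (σ : ℝ) (hσ0 : 0 ≤ σ) (m : ℕ) :
    Tendsto (fun r => σ * h (σ * r) ^ m / h r ^ m) atTop (nhds (σ ^ (m + 1))) ∧
    Tendsto (fun r => 1 - σ * h (σ * r) ^ m / h r ^ m) atTop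
      (nhds (1 - σ ^ (m + 1))) := by
  set g := derivWithin h (Ici 0)
  have hh' : ∀ t ∈ Ici (0 : ℝ), HasDerivWithinAt h (g t) (Ici 0) t := fun t ht =>
    (hh.differentiableOn (by norm_num) t ht).hasDerivWithinAt
  have hg' : ∀ t ∈ Ici (0 : ℝ), HasDerivWithinAt g (lam t * h t) (Ici 0) t := fun t ht =>
    ode t ht ▸ ((hh.derivWithin (m := 1) (uniqueDiffOn_Ici 0) (by norm_num)).differentiableOn
      (by norm_num) t ht).hasDerivWithinAt
  have hlower := self_le_and_one_le_deriv hh' hg' hlamnn h0 h'0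
  have hle := le_mul_deriv hh' hg' hlamnn h0 fun t ht => le_trans ht (hlower t ht).1
  have hg_le := deriv_le_exp_integral hg' hlamnn hb₀ h'0
    (fun t ht => one_pos.trans_le (hlower t ht).2) hle
  have hmono := monotoneOn_div_self
    (fun t ht => (hh' t (Ioi_subset_Ici_self ht)).mono Ioi_subset_Ici_self)
    fun t ht => hle t (Ioi_subset_Ici_self ht)
  obtain ⟨L, hL⟩ := (hmono.mono (Ici_subset_Ioi.2 one_pos)).exists_tendsto_atTop
    ⟨Real.exp (∫ s in Ioi 0, s * lam s), by
      rintro _ ⟨t, ht, rfl⟩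
      have ht0 : (0 : ℝ) < t := one_pos.trans_le ht
      rw [div_le_iff₀ ht0]
      nlinarith [hle t ht0.le, hg_le t ht0.le]⟩
  have hL1 : 1 ≤ L := ge_of_tendsto hL ((eventually_gt_atTop 0).mono fun t ht =>
    (le_div_iff₀ ht).2 (by simpa using (hlower t ht.le).1))
  have hmain := tendsto_mul_pow_div_pow (by linarith) hL hσ0 m
  exact ⟨hmain, tendsto_const_nhds.sub hmain⟩

/-- For `0 ≤ σ < 1` and `m ≥ 1`: `lim_{r→∞} σ h(σr)ᵐ/h(r)ᵐ = σ^{m+1}`, equivalently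
`lim_{r→∞} (1 - σ h(σr)ᵐ/h(r)ᵐ) = 1 - σ^{m+1}`. -/
theorem stmt_14 (lam h : ℝ → ℝ)
    (hlamc : ContinuousOn lam (Ici 0)) (hlamnn : ∀ t ∈ Ici (0 : ℝ), 0 ≤ lam t)
    (hlamanti : AntitoneOn lam (Ici 0))
    (hb₀ : IntegrableOn (fun s => s * lam s) (Ioi 0))
    (hh : ContDiffOn ℝ 2 h (Ici 0))
    (ode : ∀ t ∈ Ici (0 : ℝ),
      derivWithin (derivWithin h (Ici 0)) (Ici 0) t = lam t * h t)
    (h0 : h 0 = 0) (h'0 : derivWithin h (Ici 0) 0 = 1)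
    (σ : ℝ) (hσ0 : 0 ≤ σ) (hσ1 : σ < 1) (m : ℕ) (hm : 1 ≤ m) :
    Tendsto (fun r => σ * h (σ * r) ^ m / h r ^ m) atTop (nhds (σ ^ (m + 1))) ∧
    Tendsto (fun r => 1 - σ * h (σ * r) ^ m / h r ^ m) atTop
      (nhds (1 - σ ^ (m + 1))) :=
  stmt_14_general lam h hlamnn hb₀ hh ode h0 h'0 σ hσ0 m
end

section
/- Then for every t ∈ (0,r) one has Q(t) ≤ ψ₁'(t)/ψ₁(t) and t·exp(∫₀^t (Q(s) − 1/s) ds) ≤ ψ₁(t); in particular, if ∫₀^∞ s·Λ(s) ds ≤ M, then t·exp(∫₀^t (Q(s) − 1/s) ds) ≤ t·e^{M} for all t ∈ (0,r). -/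
open Set Filter MeasureTheory Topology

/-!
Put `E(t) = t exp(∫₀ᵗ (Q(s) - 1/s) ds)`, so that `E' = Q E`, `E(t) ~ t` at `0⁺`, and the Riccati
inequality reads `E'' = (Q' + Q²) E ≤ Λ E`. As `ψ₁ ≥ 0`, the Wronskian `ψ₁' E - ψ₁ E'` is
nondecreasing, and it tends to `0` at `0⁺`; hence `Q ψ₁ ≤ ψ₁'`, i.e. `(ψ₁ / E)' ≥ 0`, and
`ψ₁ / E ≥ lim_{0⁺} ψ₁ / E = 1`.

For the bound by `e^M`: `(ψ₁ ψ₁')' = ψ₁'² + Λ ψ₁² ≥ 0` and `(ψ₁'²)' = 2 Λ ψ₁ ψ₁' ≥ 0` force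
`ψ₁' ≥ 1`; then `(t ψ₁' - ψ₁)' = t Λ ψ₁ ≥ 0` gives `ψ₁ ≤ t ψ₁'`, so `(log ψ₁')' = Λ ψ₁ / ψ₁' ≤ t Λ`
and `ψ₁(t) ≤ t ψ₁'(t) ≤ t exp(∫₀ᵗ s Λ(s) ds)`.
-/

theorem apply_le_apply_of_hasDerivAt_nonneg {f f' : ℝ → ℝ} {a t : ℝ}
    (hf : ContinuousOn f (Ici a)) (hf' : ∀ s ∈ Ioi a, HasDerivAt f (f' s) s)
    (hf'₀ : ∀ s ∈ Ioi a, 0 ≤ f' s) (ht : a ≤ t) : f a ≤ f t := by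
  refine monotoneOn_of_hasDerivWithinAt_nonneg (f' := f') (convex_Ici a) hf ?_ ?_
    self_mem_Ici ht ht <;> rw [interior_Ici]
  exacts [fun s hs => (hf' s hs).hasDerivWithinAt, hf'₀]

theorem le_apply_of_tendsto_of_hasDerivAt_nonneg {f f' : ℝ → ℝ} {a b L t : ℝ}
    (hf' : ∀ s ∈ Ioo a b, HasDerivAt f (f' s) s) (hf'₀ : ∀ s ∈ Ioo a b, 0 ≤ f' s)
    (hL : Tendsto f (𝓝[>] a) (𝓝 L)) (ht : t ∈ Ioo a b) : L ≤ f t := by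
  have hmono : MonotoneOn f (Ioo a b) := by
    refine monotoneOn_of_hasDerivWithinAt_nonneg (f' := f') (convex_Ioo a b)
      (fun s hs => (hf' s hs).continuousAt.continuousWithinAt) ?_ ?_ <;> rw [interior_Ioo]
    exacts [fun s hs => (hf' s hs).hasDerivWithinAt, hf'₀]
  refine le_of_tendsto hL ?_
  filter_upwards [Ioo_mem_nhdsGT ht.1] with s hs
  exact hmono ⟨hs.1, hs.2.trans ht.2⟩ ht hs.2.le

theorem intervalIntegral_le_integral_Ioi {f : ℝ → ℝ} {a t : ℝ} (hf : IntegrableOn f (Ioi a))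
    (hf₀ : ∀ s ∈ Ioi a, 0 ≤ f s) (ht : a ≤ t) : ∫ s in a..t, f s ≤ ∫ s in Ioi a, f s := by
  rw [intervalIntegral.integral_of_le ht]
  exact setIntegral_mono_set hf ((ae_restrict_iff' measurableSet_Ioi).2 (ae_of_all _ hf₀))
    (Ioc_subset_Ioi_self.eventuallyLE)

namespace Sturm

-- `ψ'` is a separate function; the one-sided derivative at `0` enters only through continuity.
structure IsNormalizedSolution (Λ ψ ψ' : ℝ → ℝ) : Prop where
  continuousOn : ContinuousOn ψ (Ici 0)
  continuousOn_deriv : ContinuousOn ψ' (Ici 0)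
  hasDerivAt : ∀ t ∈ Ioi (0 : ℝ), HasDerivAt ψ (ψ' t) t
  hasDerivAt_deriv : ∀ t ∈ Ioi (0 : ℝ), HasDerivAt ψ' (Λ t * ψ t) t
  apply_zero : ψ 0 = 0
  deriv_zero : ψ' 0 = 1

namespace IsNormalizedSolution

variable {Λ ψ ψ' : ℝ → ℝ} (h : IsNormalizedSolution Λ ψ ψ')
include h

theorem tendsto_nhdsGT : Tendsto ψ (𝓝[>] 0) (𝓝 0) := by
  simpa [h.apply_zero] using ((h.continuousOn 0 self_mem_Ici).mono Ioi_subset_Ici_self).tendsto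

theorem tendsto_deriv_nhdsGT : Tendsto ψ' (𝓝[>] 0) (𝓝 1) := by
  simpa [h.deriv_zero] using
    ((h.continuousOn_deriv 0 self_mem_Ici).mono Ioi_subset_Ici_self).tendsto

variable (hΛ : ∀ t ∈ Ici (0 : ℝ), 0 ≤ Λ t)
include hΛ

theorem mul_deriv_nonneg {t : ℝ} (ht : 0 ≤ t) : 0 ≤ ψ t * ψ' t := by
  have := apply_le_apply_of_hasDerivAt_nonneg (h.continuousOn.mul h.continuousOn_deriv)
    (fun s hs => (h.hasDerivAt s hs).mul (h.hasDerivAt_deriv s hs)) (fun s hs => ?_) ht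
  · simpa [h.apply_zero] using this
  · have := mul_nonneg (hΛ s (mem_Ici.2 (le_of_lt hs))) (mul_self_nonneg (ψ s))
    nlinarith [mul_self_nonneg (ψ' s)]

theorem one_le_deriv {t : ℝ} (ht : 0 ≤ t) : 1 ≤ ψ' t := by
  have hsq : ∀ s ∈ Ici (0 : ℝ), 1 ≤ ψ' s ^ 2 := fun s hs => by
    have := apply_le_apply_of_hasDerivAt_nonneg (h.continuousOn_deriv.pow 2)
      (fun u hu => (h.hasDerivAt_deriv u hu).pow 2) (fun u hu => ?_) hs
    · simpa [h.deriv_zero] using this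
    · have := mul_nonneg (hΛ u (mem_Ici.2 (le_of_lt hu))) (h.mul_deriv_nonneg hΛ (le_of_lt hu))
      norm_num
      nlinarith
  by_contra! hlt
  have hneg : ψ' t ≤ -1 := by nlinarith [hsq t ht]
  obtain ⟨s, hs, hs0⟩ : (0 : ℝ) ∈ ψ' '' Icc 0 t :=
    intermediate_value_Icc' ht (h.continuousOn_deriv.mono Icc_subset_Ici_self)
      ⟨by linarith, by linarith [h.deriv_zero]⟩
  have := hsq s hs.1
  rw [hs0] at this
  norm_num at this

theorem self_le {t : ℝ} (ht : 0 ≤ t) : t ≤ ψ t := by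
  have := apply_le_apply_of_hasDerivAt_nonneg (h.continuousOn.sub continuousOn_id)
    (fun s hs => (h.hasDerivAt s hs).sub (hasDerivAt_id s)) (fun s hs => ?_) ht
  · simp only [h.apply_zero, id, sub_self, Pi.sub_apply] at this
    linarith
  · linarith [h.one_le_deriv hΛ (le_of_lt hs)]

theorem le_mul_deriv {t : ℝ} (ht : 0 ≤ t) : ψ t ≤ t * ψ' t := by
  have := apply_le_apply_of_hasDerivAt_nonneg (f' := fun s => s * (Λ s * ψ s))
    ((continuousOn_id.mul h.continuousOn_deriv).sub h.continuousOn)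
    (fun s hs => (((hasDerivAt_id s).mul (h.hasDerivAt_deriv s hs)).sub
      (h.hasDerivAt s hs)).congr_deriv (by simp))
    (fun s hs => ?_) ht
  · simp only [h.apply_zero, id, zero_mul, sub_self, Pi.sub_apply, Pi.mul_apply] at this
    linarith
  · have hs0 : 0 ≤ s := le_of_lt hs
    exact mul_nonneg hs0 (mul_nonneg (hΛ s hs0) (hs0.trans (h.self_le hΛ hs0)))

theorem tendsto_div_self : Tendsto (fun t => ψ t / t) (𝓝[>] 0) (𝓝 1) := by
  refine tendsto_of_tendsto_of_tendsto_of_le_of_le' tendsto_const_nhds h.tendsto_deriv_nhdsGT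
    ?_ ?_ <;> filter_upwards [self_mem_nhdsWithin] with t (ht : 0 < t)
  · rw [le_div_iff₀ ht, one_mul]
    exact h.self_le hΛ ht.le
  · rw [div_le_iff₀ ht, mul_comm]
    exact h.le_mul_deriv hΛ ht.le

theorem log_deriv_le_integral (hΛc : ContinuousOn Λ (Ici 0)) {t : ℝ} (ht : 0 ≤ t) :
    Real.log (ψ' t) ≤ ∫ s in (0 : ℝ)..t, s * Λ s := by
  have hpos : ∀ s ∈ Ici (0 : ℝ), 0 < ψ' s := fun s hs =>
    one_pos.trans_le (h.one_le_deriv hΛ hs)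
  have hIcc : Icc (0 : ℝ) t ⊆ Ici 0 := Icc_subset_Ici_self
  have hcont : ContinuousOn (fun s => Λ s * ψ s / ψ' s) (Icc 0 t) :=
    ((hΛc.mul h.continuousOn).div h.continuousOn_deriv fun s hs => (hpos s hs).ne').mono hIcc
  have hFTC : ∫ s in (0 : ℝ)..t, Λ s * ψ s / ψ' s = Real.log (ψ' t) - Real.log (ψ' 0) :=
    intervalIntegral.integral_eq_sub_of_hasDerivAt_of_le ht
      ((h.continuousOn_deriv.log fun s hs => (hpos s hs).ne').mono hIcc)
      (fun s hs => (h.hasDerivAt_deriv s hs.1).log (hpos s (le_of_lt hs.1)).ne')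
      (hcont.intervalIntegrable_of_Icc ht)
  rw [h.deriv_zero, Real.log_one, sub_zero] at hFTC
  rw [← hFTC]
  refine intervalIntegral.integral_mono_on ht (hcont.intervalIntegrable_of_Icc ht)
    (((continuousOn_id.mul hΛc).mono hIcc).intervalIntegrable_of_Icc ht) fun s hs => ?_
  rw [div_le_iff₀ (hpos s hs.1)]
  have := mul_le_mul_of_nonneg_left (h.le_mul_deriv hΛ hs.1) (hΛ s hs.1)
  linarith

end IsNormalizedSolution

noncomputable def riccatiWeight (Q : ℝ → ℝ) (t : ℝ) : ℝ :=
  t * Real.exp (∫ s in (0 : ℝ)..t, (Q s - 1 / s))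

variable {Q : ℝ → ℝ} {r c ε : ℝ}

theorem riccatiWeight_pos {t : ℝ} (ht : 0 < t) : 0 < riccatiWeight Q t :=
  mul_pos ht (Real.exp_pos _)

theorem continuousOn_sub_inv (hQ : ContinuousOn Q (Ioo 0 r)) :
    ContinuousOn (fun s => Q s - 1 / s) (Ioo 0 r) :=
  hQ.sub (continuousOn_const.div continuousOn_id fun _ hs => hs.1.ne')

theorem intervalIntegrable_sub_inv (hQ : ContinuousOn Q (Ioo 0 r)) (hε : ε ∈ Ioo 0 r)
    (hQasym : ∀ t ∈ Ioo 0 ε, |Q t - 1 / t| ≤ c) {t : ℝ} (ht : t ∈ Ioo 0 r) :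
    IntervalIntegrable (fun s => Q s - 1 / s) volume 0 t := by
  have hε₂ : ε / 2 ∈ Ioo 0 r := ⟨by linarith [hε.1], by linarith [hε.1, hε.2]⟩
  have hnear : IntervalIntegrable (fun s => Q s - 1 / s) volume 0 (ε / 2) := by
    have hIoc : uIoc 0 (ε / 2) ⊆ Ioo 0 ε := by
      rw [uIoc_of_le hε₂.1.le]
      exact fun s hs => ⟨hs.1, hs.2.trans_lt (by linarith [hε.1])⟩
    refine intervalIntegrable_const (c := c) |>.mono_fun' ?_ ?_
    · exact ((continuousOn_sub_inv hQ).mono (hIoc.trans (Ioo_subset_Ioo_right hε.2.le)))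
        |>.aestronglyMeasurable measurableSet_uIoc
    · filter_upwards [ae_restrict_mem measurableSet_uIoc] with s hs
      exact hQasym s (hIoc hs)
  exact hnear.trans <| ((continuousOn_sub_inv hQ).mono
    (ordConnected_Ioo.uIcc_subset hε₂ ht)).intervalIntegrable

theorem hasDerivAt_riccatiWeight (hQ : ContinuousOn Q (Ioo 0 r)) (hε : ε ∈ Ioo 0 r)
    (hQasym : ∀ t ∈ Ioo 0 ε, |Q t - 1 / t| ≤ c) {t : ℝ} (ht : t ∈ Ioo 0 r) :
    HasDerivAt (riccatiWeight Q) (Q t * riccatiWeight Q t) t := by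
  have hG := intervalIntegral.integral_hasDerivAt_right
    (intervalIntegrable_sub_inv hQ hε hQasym ht)
    ((continuousOn_sub_inv hQ).stronglyMeasurableAtFilter isOpen_Ioo t ht)
    ((continuousOn_sub_inv hQ).continuousAt (isOpen_Ioo.mem_nhds ht))
  refine ((hasDerivAt_id t).mul hG.exp).congr_deriv ?_
  simp only [riccatiWeight, id]
  field_simp [ht.1.ne']
  ring

theorem tendsto_integral_sub_inv (hε : 0 < ε) (hQasym : ∀ t ∈ Ioo 0 ε, |Q t - 1 / t| ≤ c) :
    Tendsto (fun t => ∫ s in (0 : ℝ)..t, (Q s - 1 / s)) (𝓝[>] 0) (𝓝 0) := by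
  have hlin : Tendsto (fun t : ℝ => c * t) (𝓝[>] 0) (𝓝 0) := by
    simpa using ((continuous_const_mul c).tendsto 0).mono_left nhdsWithin_le_nhds
  refine squeeze_zero_norm' ?_ hlin
  filter_upwards [Ioo_mem_nhdsGT hε] with t ht
  have := intervalIntegral.norm_integral_le_of_norm_le_const (a := 0) (b := t) (C := c)
    (f := fun s => Q s - 1 / s) fun s hs => by
      rw [uIoc_of_le ht.1.le] at hs
      exact hQasym s ⟨hs.1, hs.2.trans_lt ht.2⟩
  rwa [sub_zero, abs_of_pos ht.1] at this

theorem tendsto_riccatiWeight_div (hε : 0 < ε) (hQasym : ∀ t ∈ Ioo 0 ε, |Q t - 1 / t| ≤ c) :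
    Tendsto (fun t => riccatiWeight Q t / t) (𝓝[>] 0) (𝓝 1) := by
  have := (tendsto_integral_sub_inv hε hQasym).rexp
  rw [Real.exp_zero] at this
  refine this.congr' ?_
  filter_upwards [self_mem_nhdsWithin] with t (ht : 0 < t)
  rw [riccatiWeight, mul_div_cancel_left₀ _ ht.ne']

theorem tendsto_riccatiWeight (hε : 0 < ε) (hQasym : ∀ t ∈ Ioo 0 ε, |Q t - 1 / t| ≤ c) :
    Tendsto (riccatiWeight Q) (𝓝[>] 0) (𝓝 0) := by
  have := (tendsto_nhdsWithin_of_tendsto_nhds tendsto_id).mul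
    (tendsto_riccatiWeight_div hε hQasym)
  rw [mul_one] at this
  refine this.congr' ?_
  filter_upwards [self_mem_nhdsWithin] with t (ht : 0 < t)
  exact mul_div_cancel₀ _ ht.ne'

theorem tendsto_mul_riccatiWeight (hε : 0 < ε) (hQasym : ∀ t ∈ Ioo 0 ε, |Q t - 1 / t| ≤ c) :
    Tendsto (fun t => Q t * riccatiWeight Q t) (𝓝[>] 0) (𝓝 1) := by
  have hdev : Tendsto (fun t => (Q t - 1 / t) * riccatiWeight Q t) (𝓝[>] 0) (𝓝 0) := by
    refine squeeze_zero_norm' ?_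
      (by simpa using (tendsto_riccatiWeight hε hQasym).norm.const_mul c)
    filter_upwards [Ioo_mem_nhdsGT hε] with t ht
    rw [norm_mul]
    exact mul_le_mul_of_nonneg_right (hQasym t ht) (norm_nonneg _)
  have := hdev.add (tendsto_riccatiWeight_div hε hQasym)
  rw [zero_add] at this
  refine this.congr' ?_
  filter_upwards [self_mem_nhdsWithin] with t (ht : 0 < t)
  field_simp [ht.ne']
  ring


namespace IsNormalizedSolution

variable {Λ ψ ψ' : ℝ → ℝ} (h : IsNormalizedSolution Λ ψ ψ') (hΛ : ∀ t ∈ Ici (0 : ℝ), 0 ≤ Λ t)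
  (hQ : DifferentiableOn ℝ Q (Ioo 0 r)) (hric : ∀ t ∈ Ioo 0 r, deriv Q t + Q t ^ 2 ≤ Λ t)
  (hε : ε ∈ Ioo 0 r) (hQasym : ∀ t ∈ Ioo 0 ε, |Q t - 1 / t| ≤ c)
include h hΛ hQ hric hε hQasym

theorem mul_le_deriv_of_riccati {t : ℝ} (ht : t ∈ Ioo 0 r) : Q t * ψ t ≤ ψ' t := by
  set E := riccatiWeight Q
  have hE : ∀ s ∈ Ioo 0 r, HasDerivAt E (Q s * E s) s := fun s hs =>
    hasDerivAt_riccatiWeight hQ.continuousOn hε hQasym hs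
  have hW : 0 ≤ ψ' t * E t - ψ t * (Q t * E t) := by
    refine le_apply_of_tendsto_of_hasDerivAt_nonneg
      (f := fun s => ψ' s * E s - ψ s * (Q s * E s))
      (f' := fun s => (Λ s - (deriv Q s + Q s ^ 2)) * ψ s * E s)
      (fun s hs => ?_) (fun s hs => ?_) ?_ ht
    · have hQd := (hQ.differentiableAt (isOpen_Ioo.mem_nhds hs)).hasDerivAt
      refine (((h.hasDerivAt_deriv s hs.1).mul (hE s hs)).sub
        ((h.hasDerivAt s hs.1).mul (hQd.mul (hE s hs)))).congr_deriv ?_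
      simp only [Pi.mul_apply]
      ring
    · exact mul_nonneg (mul_nonneg (sub_nonneg.2 (hric s hs))
        (hs.1.le.trans (h.self_le hΛ hs.1.le))) (riccatiWeight_pos hs.1).le
    · simpa using (h.tendsto_deriv_nhdsGT.mul (tendsto_riccatiWeight hε.1 hQasym)).sub
        (h.tendsto_nhdsGT.mul (tendsto_mul_riccatiWeight hε.1 hQasym))
  have hEt := riccatiWeight_pos (Q := Q) ht.1
  nlinarith

theorem riccatiWeight_le {t : ℝ} (ht : t ∈ Ioo 0 r) : riccatiWeight Q t ≤ ψ t := by
  have hlim : Tendsto (fun s => ψ s / riccatiWeight Q s) (𝓝[>] 0) (𝓝 1) := by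
    have := (h.tendsto_div_self hΛ).div (tendsto_riccatiWeight_div hε.1 hQasym) one_ne_zero
    rw [div_one] at this
    refine this.congr' ?_
    filter_upwards [self_mem_nhdsWithin] with s (hs : 0 < s)
    simp only [Pi.div_apply]
    rw [div_div_div_cancel_right₀ hs.ne']
  have := le_apply_of_tendsto_of_hasDerivAt_nonneg (f := fun s => ψ s / riccatiWeight Q s)
    (f' := fun s => (ψ' s - Q s * ψ s) / riccatiWeight Q s)
    (fun s hs => ((h.hasDerivAt s hs.1).div
      (hasDerivAt_riccatiWeight hQ.continuousOn hε hQasym hs) (riccatiWeight_pos hs.1).ne')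
      |>.congr_deriv (by field_simp [(riccatiWeight_pos hs.1).ne']))
    (fun s hs => div_nonneg (sub_nonneg.2 (h.mul_le_deriv_of_riccati hΛ hQ hric hε hQasym hs))
      (riccatiWeight_pos hs.1).le) hlim ht
  rwa [one_le_div (riccatiWeight_pos ht.1)] at this

end IsNormalizedSolution

theorem isNormalizedSolution_of_contDiffOn {Λ ψ : ℝ → ℝ} (hψ : ContDiffOn ℝ 2 ψ (Ici 0))
    (hode : ∀ t ∈ Ici (0 : ℝ), derivWithin (derivWithin ψ (Ici 0)) (Ici 0) t = Λ t * ψ t)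
    (hψ0 : ψ 0 = 0) (hψ'0 : derivWithin ψ (Ici 0) 0 = 1) :
    IsNormalizedSolution Λ ψ (derivWithin ψ (Ici 0)) := by
  have hψ' : ContDiffOn ℝ 1 (derivWithin ψ (Ici 0)) (Ici 0) :=
    hψ.derivWithin (uniqueDiffOn_Ici 0) (by norm_num)
  refine ⟨hψ.continuousOn, hψ'.continuousOn, fun t ht => ?_, fun t ht => ?_, hψ0, hψ'0⟩ <;>
    have ht₀ : t ∈ Ici 0 := mem_Ici.2 (le_of_lt ht)
  · exact (hψ.differentiableOn (by norm_num) t ht₀).hasDerivWithinAt.hasDerivAt (Ici_mem_nhds ht)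
  · rw [← hode t ht₀]
    exact (hψ'.differentiableOn one_ne_zero t ht₀).hasDerivWithinAt.hasDerivAt (Ici_mem_nhds ht)

end Sturm

theorem stmt_18_general (Λ Q ψ₁ : ℝ → ℝ)
    (hΛc : ContinuousOn Λ (Ici 0)) (hΛnn : ∀ t ∈ Ici (0 : ℝ), 0 ≤ Λ t)
    (hsΛint : IntegrableOn (fun s => s * Λ s) (Ioi 0))
    (r : ℝ)
    (hQ1 : ContDiffOn ℝ 1 Q (Ioo 0 r))
    (hric : ∀ t ∈ Ioo (0 : ℝ) r, deriv Q t + Q t ^ 2 ≤ Λ t)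
    (c ε : ℝ) (hε : ε ∈ Ioo (0 : ℝ) r)
    (hQasym : ∀ t ∈ Ioo (0 : ℝ) ε, |Q t - 1 / t| ≤ c)
    (hψ₁ : ContDiffOn ℝ 2 ψ₁ (Ici 0))
    (odeψ₁ : ∀ t ∈ Ici (0 : ℝ),
      derivWithin (derivWithin ψ₁ (Ici 0)) (Ici 0) t = Λ t * ψ₁ t)
    (ψ₁0 : ψ₁ 0 = 0) (ψ₁'0 : derivWithin ψ₁ (Ici 0) 0 = 1) :
    (∀ t ∈ Ioo (0 : ℝ) r,
      Q t ≤ derivWithin ψ₁ (Ici 0) t / ψ₁ t ∧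
      t * Real.exp (∫ s in (0 : ℝ)..t, (Q s - 1 / s)) ≤ ψ₁ t) ∧
    (∀ M : ℝ, (∫ s in Ioi (0 : ℝ), s * Λ s) ≤ M →
      ∀ t ∈ Ioo (0 : ℝ) r,
        t * Real.exp (∫ s in (0 : ℝ)..t, (Q s - 1 / s)) ≤ t * Real.exp M) := by
  have hψ := Sturm.isNormalizedSolution_of_contDiffOn hψ₁ odeψ₁ ψ₁0 ψ₁'0
  have hQ : DifferentiableOn ℝ Q (Ioo 0 r) := hQ1.differentiableOn one_ne_zero
  have hweight : ∀ t ∈ Ioo (0 : ℝ) r, Sturm.riccatiWeight Q t ≤ ψ₁ t := fun t ht =>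
    hψ.riccatiWeight_le hΛnn hQ hric hε hQasym ht
  refine ⟨fun t ht => ⟨?_, hweight t ht⟩, fun M hM t ht => ?_⟩
  · rw [le_div_iff₀ (ht.1.trans_le (hψ.self_le hΛnn ht.1.le))]
    exact hψ.mul_le_deriv_of_riccati hΛnn hQ hric hε hQasym ht
  have hderiv : derivWithin ψ₁ (Ici 0) t ≤ Real.exp (∫ s in (0 : ℝ)..t, s * Λ s) :=
    (Real.log_le_iff_le_exp (one_pos.trans_le (hψ.one_le_deriv hΛnn ht.1.le))).1
      (hψ.log_deriv_le_integral hΛnn hΛc ht.1.le)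
  have htail : ∫ s in (0 : ℝ)..t, s * Λ s ≤ M :=
    (intervalIntegral_le_integral_Ioi hsΛint
      (fun s hs => mul_nonneg (le_of_lt hs) (hΛnn s (mem_Ici.2 (le_of_lt hs)))) ht.1.le).trans hM
  calc Sturm.riccatiWeight Q t ≤ ψ₁ t := hweight t ht
    _ ≤ t * derivWithin ψ₁ (Ici 0) t := hψ.le_mul_deriv hΛnn ht.1.le
    _ ≤ t * Real.exp M :=
      mul_le_mul_of_nonneg_left (hderiv.trans (Real.exp_le_exp.2 htail)) ht.1.le

/-- If `Q` satisfies the Riccati inequality `Q' + Q² ≤ Λ` on `(0,r)` with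
`Q(t) = 1/t + O(1)` as `t → 0⁺`, then `Q ≤ ψ₁'/ψ₁` and
`t exp(∫₀^t (Q(s) - 1/s) ds) ≤ ψ₁(t)` on `(0,r)`; in particular if
`∫₀^∞ s Λ(s) ds ≤ M` then `t exp(∫₀^t (Q(s) - 1/s) ds) ≤ t e^M` on `(0,r)`. -/
theorem stmt_18 (Λ Q ψ₁ : ℝ → ℝ)
    (hΛc : ContinuousOn Λ (Ici 0)) (hΛnn : ∀ t ∈ Ici (0 : ℝ), 0 ≤ Λ t)
    (hsΛint : IntegrableOn (fun s => s * Λ s) (Ioi 0))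
    (r : ℝ) (hr : 0 < r)
    (hQ1 : ContDiffOn ℝ 1 Q (Ioo 0 r))
    (hric : ∀ t ∈ Ioo (0 : ℝ) r, deriv Q t + Q t ^ 2 ≤ Λ t)
    (c ε : ℝ) (hc : 0 < c) (hε : ε ∈ Ioo (0 : ℝ) r)
    (hQasym : ∀ t ∈ Ioo (0 : ℝ) ε, |Q t - 1 / t| ≤ c)
    (hψ₁ : ContDiffOn ℝ 2 ψ₁ (Ici 0))
    (odeψ₁ : ∀ t ∈ Ici (0 : ℝ),
      derivWithin (derivWithin ψ₁ (Ici 0)) (Ici 0) t = Λ t * ψ₁ t)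
    (ψ₁0 : ψ₁ 0 = 0) (ψ₁'0 : derivWithin ψ₁ (Ici 0) 0 = 1) :
    (∀ t ∈ Ioo (0 : ℝ) r,
      Q t ≤ derivWithin ψ₁ (Ici 0) t / ψ₁ t ∧
      t * Real.exp (∫ s in (0 : ℝ)..t, (Q s - 1 / s)) ≤ ψ₁ t) ∧
    (∀ M : ℝ, (∫ s in Ioi (0 : ℝ), s * Λ s) ≤ M →
      ∀ t ∈ Ioo (0 : ℝ) r,
        t * Real.exp (∫ s in (0 : ℝ)..t, (Q s - 1 / s)) ≤ t * Real.exp M) :=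
  stmt_18_general Λ Q ψ₁ hΛc hΛnn hsΛint r hQ1 hric c ε hε hQasym hψ₁ odeψ₁ ψ₁0 ψ₁'0
end
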